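/- arXiv:0801.2392 — 11 statements merged into one kernel-verified Lean document; each statement's English description precedes it below -/
import Mathlib

section
/- Every local clone C on a countably infinite set X is of the form Pol(R) for some set R of finitary relations on X; in fact C = Pol(Inv(C)). -/
/-- A finitary operation on `X`: an `(n+1)`-ary function `X^(n+1) → X` (arities are ≥ 1). -/
abbrev FinOp (X : Type) := Σ n : ℕ, (Fin (n + 1) → X) → X

/-- A finitary relation on `X`: an `(m+1)`-ary relation `ρ ⊆ X^(m+1)` (arities are ≥ 1). -/
abbrev FinRel (X : Type) := Σ m : ℕ, Set (Fin (m + 1) → X)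

variable {X : Type}

/-- `C` is a clone: it contains all projections and is closed under composition. -/
def IsClone (C : Set (FinOp X)) : Prop :=
  (∀ (n : ℕ) (k : Fin (n + 1)), (⟨n, fun x => x k⟩ : FinOp X) ∈ C) ∧
  (∀ (n m : ℕ) (f : (Fin (n + 1) → X) → X) (g : Fin (n + 1) → (Fin (m + 1) → X) → X),
    (⟨n, f⟩ : FinOp X) ∈ C → (∀ i, (⟨m, g i⟩ : FinOp X) ∈ C) →
    (⟨m, fun x => f fun i => g i x⟩ : FinOp X) ∈ C)

/-- `C` is a local clone: a clone each of whose `n`-ary fragments is closed in the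
product topology on `X^(X^n)`, where `X` carries the discrete topology. -/
def IsLocalClone (C : Set (FinOp X)) : Prop :=
  IsClone C ∧
  ∀ n : ℕ,
    letI : TopologicalSpace X := ⊥
    IsClosed {f : (Fin (n + 1) → X) → X | (⟨n, f⟩ : FinOp X) ∈ C}

/-- The smallest local clone containing `F` (the local clone generated by `F`). -/
def cllClosure (F : Set (FinOp X)) : Set (FinOp X) :=
  ⋂₀ {C : Set (FinOp X) | IsLocalClone C ∧ F ⊆ C}

/-- `f` preserves the relation `ρ`. -/
def Preserves {n m : ℕ} (f : (Fin (n + 1) → X) → X) (ρ : Set (Fin (m + 1) → X)) : Prop :=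
  ∀ r : Fin (n + 1) → Fin (m + 1) → X, (∀ i, r i ∈ ρ) → (fun j => f fun i => r i j) ∈ ρ

/-- `Pol R`: all finitary operations preserving every relation in `R`. -/
def Polymorphisms (R : Set (FinRel X)) : Set (FinOp X) :=
  {f | ∀ ρ ∈ R, Preserves f.2 ρ.2}

/-- `Inv F`: all finitary relations invariant under every operation in `F`. -/
def Invariants (F : Set (FinOp X)) : Set (FinRel X) :=
  {ρ | ∀ f ∈ F, Preserves f.2 ρ.2}

/-- The clone of projections. -/
def projClone (X : Type) : Set (FinOp X) :=
  {f | ∃ k : Fin (f.1 + 1), f.2 = fun x => x k}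

/-!
An operation `g` preserving every `C`-invariant relation agrees with a member of `C` on each
finite set of arguments `a₀, …, aₘ`: the tuples `(f a₀, …, f aₘ)` with `f ∈ C` form a
`C`-invariant relation containing the coordinate tuples `(a₀ i, …, aₘ i)` (images of the
projections), so applying `g` to these lands back in it. Since `C` is local, agreement on
every finite set puts `g` in `C`.
-/

open Set

theorem subset_polymorphisms_invariants (F : Set (FinOp X)) :
    F ⊆ Polymorphisms (Invariants F) :=
  fun f hf _ hρ => hρ f hf

theorem mem_closure_of_forall_finite_eqOn {ι Y : Type*} [TopologicalSpace Y]
    [DiscreteTopology Y] {S : Set (ι → Y)} {g : ι → Y}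
    (h : ∀ I : Set ι, I.Finite → ∃ f ∈ S, EqOn f g I) : g ∈ closure S := by
  rw [mem_closure_iff_nhds]
  intro U hU
  rw [nhds_pi, Filter.mem_pi] at hU
  obtain ⟨I, hI, t, ht, htU⟩ := hU
  obtain ⟨f, hfS, hfg⟩ := h I hI
  refine ⟨f, htU fun x hx => ?_, hfS⟩
  rw [hfg hx]
  exact mem_of_mem_nhds (ht x)

theorem IsLocalClone.mem_of_forall_finite_eqOn {C : Set (FinOp X)} (hC : IsLocalClone C)
    {n : ℕ} {g : (Fin (n + 1) → X) → X}
    (h : ∀ I : Set (Fin (n + 1) → X), I.Finite → ∃ f, (⟨n, f⟩ : FinOp X) ∈ C ∧ EqOn f g I) :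
    (⟨n, g⟩ : FinOp X) ∈ C := by
  let : TopologicalSpace X := ⊥
  have : DiscreteTopology X := ⟨rfl⟩
  have hg := mem_closure_of_forall_finite_eqOn (S := {f | (⟨n, f⟩ : FinOp X) ∈ C}) h
  rwa [(hC.2 n).closure_eq] at hg

/-- For a clone `C`, the `C`-invariant relation generated by the coordinate tuples
`fun j => a j i`. -/
def evalRel (C : Set (FinOp X)) (n : ℕ) {m : ℕ} (a : Fin (m + 1) → Fin (n + 1) → X) :
    Set (Fin (m + 1) → X) :=
  {y | ∃ f, (⟨n, f⟩ : FinOp X) ∈ C ∧ y = fun j => f (a j)}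

section Clone

variable {C : Set (FinOp X)} (hC : IsClone C) {n m : ℕ} (a : Fin (m + 1) → Fin (n + 1) → X)
include hC

theorem evalRel_mem_invariants : (⟨m, evalRel C n a⟩ : FinRel X) ∈ Invariants C := by
  rintro ⟨k, h⟩ hh r hr
  choose w hwC hw using hr
  exact ⟨fun x => h fun i => w i x, hC.2 k n h w hh hwC, by simp only [hw]⟩

theorem coord_mem_evalRel (i : Fin (n + 1)) : (fun j => a j i) ∈ evalRel C n a :=
  ⟨fun x => x i, hC.1 n i, rfl⟩

theorem exists_mem_eqOn_range {g : (Fin (n + 1) → X) → X}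
    (hg : (⟨n, g⟩ : FinOp X) ∈ Polymorphisms (Invariants C)) :
    ∃ f, (⟨n, f⟩ : FinOp X) ∈ C ∧ EqOn f g (range a) := by
  obtain ⟨f, hfC, hf⟩ :=
    hg _ (evalRel_mem_invariants hC a) (fun i j => a j i) (coord_mem_evalRel hC a)
  refine ⟨f, hfC, ?_⟩
  rintro _ ⟨j, rfl⟩
  exact (congrFun hf j).symm

end Clone

theorem exists_mem_eqOn_of_finite {C : Set (FinOp X)} (hC : IsClone C) {n : ℕ}
    {g : (Fin (n + 1) → X) → X} (hg : (⟨n, g⟩ : FinOp X) ∈ Polymorphisms (Invariants C))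
    {I : Set (Fin (n + 1) → X)} (hI : I.Finite) :
    ∃ f, (⟨n, f⟩ : FinOp X) ∈ C ∧ EqOn f g I := by
  obtain ⟨_ | m, a, rfl⟩ := hI.fin_embedding
  · exact ⟨fun x => x 0, hC.1 n 0, fun x ⟨j, _⟩ => j.elim0⟩
  · exact exists_mem_eqOn_range hC a hg

theorem localClone_eq_pol_inv_general (X : Type)
    (C : Set (FinOp X)) (hC : IsLocalClone C) :
    (∃ R : Set (FinRel X), C = Polymorphisms R) ∧ C = Polymorphisms (Invariants C) := by
  have hpol : C = Polymorphisms (Invariants C) := by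
    refine (subset_polymorphisms_invariants C).antisymm ?_
    rintro ⟨n, g⟩ hg
    exact hC.mem_of_forall_finite_eqOn fun I hI => exists_mem_eqOn_of_finite hC.1 hg hI
  exact ⟨⟨Invariants C, hpol⟩, hpol⟩

/-- Every local clone `C` on a countably infinite set is of the form `Pol R`;
in fact `C = Pol (Inv C)`. -/
theorem localClone_eq_pol_inv (X : Type) [Countable X] [Infinite X]
    (C : Set (FinOp X)) (hC : IsLocalClone C) :
    (∃ R : Set (FinRel X), C = Polymorphisms R) ∧ C = Polymorphisms (Invariants C) :=
  localClone_eq_pol_inv_general X C hC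
end

section
/- In the complete lattice Cll(X) of all local clones on a countably infinite set X, ordered by inclusion, the only compact element is the clone consisting exactly of the projections. -/
variable {X : Type}

-- ### auxiliary lemmas

lemma proj_subset_of_isClone {C : Set (FinOp X)} (h : IsClone C) :
    projClone X ⊆ C := by
  rintro ⟨n, f⟩ ⟨k, hk⟩
  have : f = fun x => x k := hk
  rw [this]
  exact h.1 n k

lemma cllClosure_subset {S D : Set (FinOp X)} (hD : IsLocalClone D) (hSD : S ⊆ D) :
    cllClosure S ⊆ D := fun f hf => Set.mem_sInter.mp hf D ⟨hD, hSD⟩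

lemma approx_mem {D : Set (FinOp X)} (hD : IsLocalClone D) (n : ℕ)
    (f : (Fin (n + 1) → X) → X)
    (hap : ∀ I : Finset (Fin (n + 1) → X), ∃ h : (Fin (n + 1) → X) → X,
      (⟨n, h⟩ : FinOp X) ∈ D ∧ ∀ x ∈ I, h x = f x) :
    (⟨n, f⟩ : FinOp X) ∈ D := by
  letI : TopologicalSpace X := ⊥
  by_contra hfD
  have hcl : IsClosed {h : (Fin (n + 1) → X) → X | (⟨n, h⟩ : FinOp X) ∈ D} := hD.2 n
  have hop : IsOpen {h : (Fin (n + 1) → X) → X | (⟨n, h⟩ : FinOp X) ∈ D}ᶜ := hcl.isOpen_compl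
  rw [isOpen_pi_iff] at hop
  obtain ⟨I, u, hu, hsub⟩ := hop f hfD
  obtain ⟨h, hhD, hag⟩ := hap I
  exact hsub (fun a ha => by rw [hag a ha]; exact (hu a ha).2) hhD

lemma polymorphisms_antitone {R R' : Set (FinRel X)} (h : R ⊆ R') :
    Polymorphisms R' ⊆ Polymorphisms R :=
  fun _ hf ρ hρ => hf ρ (h hρ)

lemma isLocalClone_polymorphisms (R : Set (FinRel X)) :
    IsLocalClone (Polymorphisms R) := by
  refine ⟨⟨?_, ?_⟩, ?_⟩
  · intro n k ρ hρ r hr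
    exact hr k
  · intro n m f g hf hg ρ hρ r hr
    exact hf ρ hρ (fun i j => g i fun i' => r i' j) (fun i => hg i ρ hρ r hr)
  · intro n
    letI : TopologicalSpace X := ⊥
    haveI : DiscreteTopology X := ⟨rfl⟩
    have heq : {f : (Fin (n + 1) → X) → X | (⟨n, f⟩ : FinOp X) ∈ Polymorphisms R} =
        ⋂ ρ ∈ R, ⋂ r ∈ {r : Fin (n + 1) → Fin (ρ.1 + 1) → X | ∀ i, r i ∈ ρ.2},
          (fun f (j : Fin (ρ.1 + 1)) => f fun i => r i j) ⁻¹' ρ.2 := by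
      ext f
      simp only [Set.mem_setOf_eq, Set.mem_iInter, Set.mem_preimage, Polymorphisms, Preserves]
    rw [heq]
    refine isClosed_iInter fun ρ => isClosed_iInter fun _ =>
      isClosed_iInter fun r => isClosed_iInter fun _ => ?_
    exact IsClosed.preimage (continuous_pi fun j => continuous_apply _) (isClosed_discrete _)

/-- The local clone of operations that are "projections with deviation values and
anchor coordinates inside `F`". -/
def ZC (F : Set X) : Set (FinOp X) :=
  {f | ∃ k : Fin (f.1 + 1), ∀ x, f.2 x = x k ∨ (f.2 x ∈ F ∧ x k ∈ F)}

lemma ZC_mono {F F' : Set X} (h : F ⊆ F') : ZC F ⊆ ZC F' := by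
  rintro ⟨n, f⟩ ⟨k, hk⟩
  exact ⟨k, fun x => (hk x).imp id fun hx => ⟨h hx.1, h hx.2⟩⟩

lemma isLocalClone_ZC (F : Set X) : IsLocalClone (ZC F) := by
  refine ⟨⟨?_, ?_⟩, ?_⟩
  · intro n k
    exact ⟨k, fun x => Or.inl rfl⟩
  · intro n m f g hfZ hgZ
    obtain ⟨kf, hkf⟩ := hfZ
    have hg' : ∀ i, ∃ ki : Fin (m + 1), ∀ x, g i x = x ki ∨ (g i x ∈ F ∧ x ki ∈ F) := hgZ
    choose kg hkg using hg'
    refine ⟨kg kf, fun x => ?_⟩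
    rcases hkf (fun i => g i x) with h1 | ⟨h2a, h2b⟩
    · rcases hkg kf x with h3 | ⟨h3a, h3b⟩
      · left; rw [h1]; exact h3
      · right; exact ⟨by rw [h1]; exact h3a, h3b⟩
    · refine Or.inr ⟨h2a, ?_⟩
      rcases hkg kf x with h3 | ⟨h3a, h3b⟩
      · exact h3 ▸ h2b
      · exact h3b
  · intro n
    letI : TopologicalSpace X := ⊥
    haveI : DiscreteTopology X := ⟨rfl⟩
    have heq : {f : (Fin (n + 1) → X) → X | (⟨n, f⟩ : FinOp X) ∈ ZC F} =
        ⋃ k : Fin (n + 1), ⋂ x : Fin (n + 1) → X,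
          (fun f => f x) ⁻¹' {y | y = x k ∨ (y ∈ F ∧ x k ∈ F)} := by
      ext f
      simp only [Set.mem_setOf_eq, Set.mem_iUnion, Set.mem_iInter, Set.mem_preimage, ZC]
    rw [heq]
    exact isClosed_iUnion_of_finite fun k => isClosed_iInter fun x =>
      IsClosed.preimage (continuous_apply x) (isClosed_discrete _)

lemma stepA (C : Set (FinOp X))
    (hcomp : ∀ 𝒜 : Set (Set (FinOp X)), (∀ D ∈ 𝒜, IsLocalClone D) →
        C ⊆ cllClosure (⋃₀ 𝒜) →
        ∃ 𝒜' ⊆ 𝒜, 𝒜'.Finite ∧ C ⊆ cllClosure (⋃₀ 𝒜')) :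
    ∃ F : Finset X, C ⊆ ZC (↑F : Set X) := by
  classical
  have h𝒜 : ∀ D ∈ {D : Set (FinOp X) | ∃ F : Finset X, D = ZC (↑F : Set X)},
      IsLocalClone D := by
    rintro D ⟨F, rfl⟩; exact isLocalClone_ZC _
  have hdense : C ⊆ cllClosure (⋃₀ {D : Set (FinOp X) | ∃ F : Finset X, D = ZC (↑F : Set X)}) := by
    rintro ⟨q, f2⟩ _
    refine Set.mem_sInter.mpr ?_
    rintro D ⟨hD, hDsub⟩
    refine approx_mem hD q f2 (fun I => ?_)
    refine ⟨fun x => if x ∈ I then f2 x else x 0, ?_, fun x hx => if_pos hx⟩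
    refine hDsub (Set.mem_sUnion.mpr ⟨ZC (↑(I.image f2 ∪ I.image fun x => x 0) : Set X),
      ⟨_, rfl⟩, ?_⟩)
    refine ⟨0, fun x => ?_⟩
    dsimp only
    by_cases hx : x ∈ I
    · rw [if_pos hx]
      by_cases hfx : f2 x = x 0
      · exact Or.inl hfx
      · refine Or.inr ⟨?_, ?_⟩
        · simp only [Finset.coe_union, Set.mem_union, Finset.coe_image, Set.mem_image]
          exact Or.inl ⟨x, hx, rfl⟩
        · simp only [Finset.coe_union, Set.mem_union, Finset.coe_image, Set.mem_image]
          exact Or.inr ⟨x, hx, rfl⟩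
    · rw [if_neg hx]; exact Or.inl rfl
  obtain ⟨𝒜', hsub, hfin, hCsub⟩ := hcomp _ h𝒜 hdense
  set Fc : Set (FinOp X) → Finset X :=
    fun D => if h : ∃ F : Finset X, D = ZC (↑F : Set X) then h.choose else ∅ with hFc
  refine ⟨hfin.toFinset.sup Fc, ?_⟩
  refine hCsub.trans (cllClosure_subset (isLocalClone_ZC _) ?_)
  refine Set.sUnion_subset fun D hD => ?_
  have hex : ∃ F : Finset X, D = ZC (↑F : Set X) := hsub hD
  have hDeq : D = ZC (↑(Fc D) : Set X) := by
    rw [hFc]; simp only [dif_pos hex]; exact hex.choose_spec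
  rw [hDeq]
  exact ZC_mono (Finset.coe_subset.mpr (Finset.le_sup (hfin.mem_toFinset.mpr hD)))

lemma stepB [Infinite X] (C : Set (FinOp X))
    (hcomp : ∀ 𝒜 : Set (Set (FinOp X)), (∀ D ∈ 𝒜, IsLocalClone D) →
        C ⊆ cllClosure (⋃₀ 𝒜) →
        ∃ 𝒜' ⊆ 𝒜, 𝒜'.Finite ∧ C ⊆ cllClosure (⋃₀ 𝒜'))
    (F : Finset X) (hF : C ⊆ ZC (↑F : Set X)) :
    C ⊆ projClone X := by
  classical
  rintro ⟨nf, g⟩ hgC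
  obtain ⟨k, hk⟩ := hF hgC
  by_cases hdev : ∀ x, g x = x k
  · exact ⟨k, funext hdev⟩
  exfalso
  push_neg at hdev
  obtain ⟨t, ht⟩ := hdev
  have htk : g t ∈ (↑F : Set X) ∧ t k ∈ (↑F : Set X) := (hk t).resolve_left ht
  have hinf : ((↑F : Set X))ᶜ.Infinite := F.finite_toSet.infinite_compl
  set e : ℕ ↪ ((↑F : Set X)ᶜ : Set X) := hinf.natEmbedding with he
  set c : ℕ → X := fun l => (e l : X) with hc
  have hcinj : Function.Injective c := fun a b hab => e.injective (Subtype.ext hab)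
  have hcF : ∀ l, c l ∉ (↑F : Set X) := fun l => (e l).2
  set ρ : ℕ → FinRel X :=
    fun l => ⟨1, {w | w 0 = w 1 ∨ (w 0 = t k ∧ w 1 = c l)}⟩ with hρ
  set A : ℕ → Set (FinOp X) :=
    fun K => Polymorphisms {σ | ∃ l, K ≤ l ∧ σ = ρ l} with hA
  have hAmono : ∀ {K K' : ℕ}, K ≤ K' → A K ⊆ A K' := by
    intro K K' hKK'
    exact polymorphisms_antitone fun σ hσ => by
      obtain ⟨l, hl, hσ⟩ := hσ; exact ⟨l, hKK'.trans hl, hσ⟩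
  have hAloc : ∀ K, IsLocalClone (A K) := fun K => isLocalClone_polymorphisms _
  have hdense : C ⊆ cllClosure (⋃₀ Set.range A) := by
    rintro ⟨q, f2⟩ _
    refine Set.mem_sInter.mpr ?_
    rintro D ⟨hD, hDsub⟩
    refine approx_mem hD q f2 (fun I => ?_)
    set E : Finset X := I.biUnion (fun x => Finset.image x Finset.univ) with hE
    have hbadfin : {l | c l ∈ (↑E : Set X)}.Finite :=
      Set.Finite.preimage hcinj.injOn E.finite_toSet
    obtain ⟨K, hK⟩ := hbadfin.bddAbove
    set R : X → X := fun a => if ∃ l, K + 1 ≤ l ∧ c l = a then t k else a with hR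
    have hRc : ∀ l, K + 1 ≤ l → R (c l) = t k := fun l hl => if_pos ⟨l, hl, rfl⟩
    have hRtk : R (t k) = t k := by
      by_cases h : ∃ l, K + 1 ≤ l ∧ c l = t k
      · exact if_pos h
      · exact if_neg h
    refine ⟨fun x => f2 fun i => R (x i), ?_, fun x hx => ?_⟩
    · refine hDsub (Set.mem_sUnion.mpr ⟨A (K + 1), ⟨K + 1, rfl⟩, ?_⟩)
      rintro σ ⟨l, hl, rfl⟩ r hr
      have hcols : (fun i => R (r i 0)) = fun i => R (r i 1) := by
        funext i
        rcases hr i with h1 | ⟨h2, h3⟩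
        · rw [h1]
        · rw [h2, h3, hRtk, hRc l hl]
      exact Or.inl (congrArg f2 hcols)
    · have hxeq : (fun i => R (x i)) = x := by
        funext i
        have hxE : x i ∈ (↑E : Set X) := by
          rw [hE]
          exact_mod_cast Finset.mem_biUnion.mpr
            ⟨x, hx, Finset.mem_image.mpr ⟨i, Finset.mem_univ _, rfl⟩⟩
        by_cases hcond : ∃ l, K + 1 ≤ l ∧ c l = x i
        · obtain ⟨l, hl, hcl⟩ := hcond
          have hmem : l ∈ {l | c l ∈ (↑E : Set X)} := by
            rw [Set.mem_setOf_eq, hcl]; exact hxE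
          have := hK hmem
          omega
        · exact if_neg hcond
      show f2 (fun i => R (x i)) = f2 x
      rw [hxeq]
  obtain ⟨𝒜', hsub, hfin, hCsub⟩ := hcomp _ (by rintro D ⟨K, rfl⟩; exact hAloc K) hdense
  set Kc : Set (FinOp X) → ℕ := fun D => if h : ∃ K, A K = D then h.choose else 0 with hKc
  set K' : ℕ := hfin.toFinset.sup Kc with hK'
  have hbound : ⋃₀ 𝒜' ⊆ A K' := by
    refine Set.sUnion_subset fun D hD => ?_
    have hex : ∃ K, A K = D := hsub hD
    have hDeq : A (Kc D) = D := by
      rw [hKc]; simp only [dif_pos hex]; exact hex.choose_spec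
    rw [← hDeq]
    exact hAmono (Finset.le_sup (hfin.mem_toFinset.mpr hD))
  have hCA : C ⊆ A K' := hCsub.trans (cllClosure_subset (hAloc K') hbound)
  have hpres : Preserves g (ρ K').2 := hCA hgC (ρ K') ⟨K', le_refl _, rfl⟩
  set V : Fin (nf + 1) → X := fun i => if t i = t k then c K' else t i with hV
  have hrows : ∀ i, (fun j : Fin 2 => if j = 0 then t i else V i) ∈ (ρ K').2 := by
    intro i
    by_cases h : t i = t k
    · refine Or.inr ⟨?_, ?_⟩
      · simp [h]
      · simp [hV, h]
    · refine Or.inl ?_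
      simp [hV, h]
  have hout := hpres (fun i j => if j = 0 then t i else V i) hrows
  have hcol0 : (fun i => if (0 : Fin 2) = 0 then t i else V i) = t := by
    funext i; simp
  have hcol1 : (fun i => if (1 : Fin 2) = 0 then t i else V i) = V := by
    funext i; simp
  have hVk : V k = c K' := by simp [hV]
  have hgV : g V = c K' := by
    rcases hk V with h1 | ⟨_, h3⟩
    · have h1' : g V = V k := h1
      rw [h1', hVk]
    · exact absurd (hVk ▸ h3) (hcF K')
  rcases hout with h1 | ⟨h2, _⟩
  · have h1' : g (fun i => if (0 : Fin 2) = 0 then t i else V i)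
        = g (fun i => if (1 : Fin 2) = 0 then t i else V i) := h1
    rw [hcol0, hcol1, hgV] at h1'
    exact hcF K' (h1' ▸ htk.1)
  · have h2' : g (fun i => if (0 : Fin 2) = 0 then t i else V i) = t k := h2
    rw [hcol0] at h2'
    exact ht h2'

/-- In the complete lattice of local clones on a countably infinite set `X`
(ordered by inclusion, where the join of a family of local clones is the smallest local clone
containing their union), the only compact element is the clone of projections. -/
theorem onlyCompact_projClone (X : Type) [Countable X] [Infinite X]
    (C : Set (FinOp X)) (hC : IsLocalClone C) :
    (∀ 𝒜 : Set (Set (FinOp X)), (∀ D ∈ 𝒜, IsLocalClone D) →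
        C ⊆ cllClosure (⋃₀ 𝒜) →
        ∃ 𝒜' ⊆ 𝒜, 𝒜'.Finite ∧ C ⊆ cllClosure (⋃₀ 𝒜')) ↔
      C = projClone X := by
  constructor
  · intro hcomp
    obtain ⟨F, hF⟩ := stepA C hcomp
    exact Set.Subset.antisymm (stepB C hcomp F hF) (proj_subset_of_isClone hC.1)
  · rintro rfl 𝒜 h𝒜 hsub
    refine ⟨∅, Set.empty_subset _, Set.finite_empty, ?_⟩
    intro f hf
    refine Set.mem_sInter.mpr ?_
    rintro D ⟨hD, _⟩
    exact proj_subset_of_isClone hD.1 hf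
end

section
/- Let ≤ be a linear order on the countably infinite set X with no greatest element. For a ∈ X let C_a be the set of all finitary operations f with f(x) ≤ a for all tuples x, and let D_a be the set of all finitary operations f such that for every tuple x whose maximum entry is ≥ a, f(x) ≥ max(x). Then the smallest local clone containing ⋃_{a∈X} C_a is the clone O of all finitary operations, and likewise the smallest local clone containing ⋃_{a∈X} D_a is O. -/
variable {X : Type}

/-- The maximum entry of a tuple, with respect to a linear order. -/
def maxT {X : Type} [LinearOrder X] {n : ℕ} (x : Fin (n + 1) → X) : X :=
  Finset.univ.sup' Finset.univ_nonempty x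

/-! A local clone contains every operation that agrees, on each finite set of tuples, with one
of its members. An arbitrary `f` agrees on a finite set `I` with the operation that equals `f`
on `I` and a large constant elsewhere, which lies in some `C_a`; and with the operation that
equals `f` on `I` and `maxT` elsewhere, which lies in `D_a` as soon as `a` exceeds every entry
of every tuple in `I`. -/

theorem IsLocalClone.mem_of_forall_finset_exists_eqOn {C : Set (FinOp X)} (hC : IsLocalClone C)
    {n : ℕ} (f : (Fin (n + 1) → X) → X)
    (h : ∀ I : Finset (Fin (n + 1) → X), ∃ g, (⟨n, g⟩ : FinOp X) ∈ C ∧ Set.EqOn g f I) :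
    (⟨n, f⟩ : FinOp X) ∈ C := by
  let _ : TopologicalSpace X := ⊥
  suffices f ∈ closure {g : (Fin (n + 1) → X) → X | (⟨n, g⟩ : FinOp X) ∈ C} by
    rwa [(hC.2 n).closure_eq] at this
  refine mem_closure_iff.mpr fun U hU hfU => ?_
  obtain ⟨I, u, hu, hIU⟩ := isOpen_pi_iff.mp hU f hfU
  obtain ⟨g, hgC, hgf⟩ := h I
  exact ⟨g, hIU fun x hx => hgf hx ▸ (hu x hx).2, hgC⟩

theorem cllClosure_eq_univ_of_forall_finset_exists_eqOn {F : Set (FinOp X)}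
    (h : ∀ (n : ℕ) (f : (Fin (n + 1) → X) → X) (I : Finset (Fin (n + 1) → X)),
      ∃ g, (⟨n, g⟩ : FinOp X) ∈ F ∧ Set.EqOn g f I) :
    cllClosure F = Set.univ := by
  refine Set.eq_univ_of_forall fun ⟨n, f⟩ C ⟨hC, hFC⟩ => ?_
  refine hC.mem_of_forall_finset_exists_eqOn f fun I => ?_
  obtain ⟨g, hgF, hgf⟩ := h n f I
  exact ⟨g, hFC hgF, hgf⟩

theorem exists_eqOn_bounded {α β : Type*} [LinearOrder β] [Nonempty β] (f : α → β)
    (I : Finset α) : ∃ g : α → β, (∃ a, ∀ x, g x ≤ a) ∧ Set.EqOn g f I := by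
  classical
  obtain ⟨a, ha⟩ := (I.image f).exists_le
  refine ⟨I.piecewise f fun _ => a, ⟨a, fun x => ?_⟩, fun x hx => I.piecewise_eq_of_mem _ _ hx⟩
  by_cases hx : x ∈ I
  · simpa [hx] using ha (f x) (Finset.mem_image_of_mem f hx)
  · simp [hx]

theorem exists_eqOn_le_of_le_maxT [LinearOrder X] [Nonempty X] [NoMaxOrder X] {n : ℕ}
    (f : (Fin (n + 1) → X) → X) (I : Finset (Fin (n + 1) → X)) :
    ∃ g, (∃ a, ∀ x, a ≤ maxT x → maxT x ≤ g x) ∧ Set.EqOn g f I := by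
  classical
  obtain ⟨b, hb⟩ := (I.image maxT).exists_le
  obtain ⟨a, hba⟩ := exists_gt b
  have h_notMem : ∀ x, a ≤ maxT x → x ∉ I := fun x hax hx =>
    (hba.trans_le hax).not_ge (hb _ (Finset.mem_image_of_mem _ hx))
  refine ⟨I.piecewise f maxT, ⟨a, fun x hax => ?_⟩, fun x hx => I.piecewise_eq_of_mem _ _ hx⟩
  rw [I.piecewise_eq_of_notMem _ _ (h_notMem x hax)]

theorem cllClosure_union_Ca_Da_general (X : Type) [Infinite X] [LinearOrder X]
    (hnomax : ∀ a : X, ∃ b : X, a < b) :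
    cllClosure (⋃ a : X, {f : FinOp X | ∀ x, f.2 x ≤ a}) = Set.univ ∧
    cllClosure (⋃ a : X, {f : FinOp X | ∀ x, a ≤ maxT x → maxT x ≤ f.2 x}) = Set.univ := by
  have : NoMaxOrder X := ⟨hnomax⟩
  constructor <;> refine cllClosure_eq_univ_of_forall_finset_exists_eqOn fun n f I => ?_
  · obtain ⟨g, ⟨a, ha⟩, hgf⟩ := exists_eqOn_bounded f I
    exact ⟨g, Set.mem_iUnion.mpr ⟨a, ha⟩, hgf⟩
  · obtain ⟨g, ⟨a, ha⟩, hgf⟩ := exists_eqOn_le_of_le_maxT f I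
    exact ⟨g, Set.mem_iUnion.mpr ⟨a, ha⟩, hgf⟩

/-- For a linear order without greatest element on the countably infinite set `X`,
the smallest local clone containing `⋃ₐ C_a` is the clone of all operations, and likewise
the smallest local clone containing `⋃ₐ D_a` is the clone of all operations. -/
theorem cllClosure_union_Ca_Da (X : Type) [Countable X] [Infinite X] [LinearOrder X]
    (hnomax : ∀ a : X, ∃ b : X, a < b) :
    cllClosure (⋃ a : X, {f : FinOp X | ∀ x, f.2 x ≤ a}) = Set.univ ∧
    cllClosure (⋃ a : X, {f : FinOp X | ∀ x, a ≤ maxT x → maxT x ≤ f.2 x}) = Set.univ :=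
  cllClosure_union_Ca_Da_general X hnomax
end

section
/- Let ≤ be a linear order on the countably infinite set X with no greatest element; for a ∈ X let C_a = {f : f(x) ≤ a for all tuples x} and D_a = {f : for every tuple x with max(x) ≥ a, f(x) ≥ max(x)}. If a finitary operation f on X has unbounded range (no a ∈ X bounds all its values) and f is not a projection, then f does not belong to ⋃_{a∈X} ⟨C_a⟩_loc; and if f has bounded range, then f does not belong to ⋃_{a∈X} ⟨D_a⟩_loc. -/
variable {X : Type}

theorem cllClosure_subset_s6 {F C : Set (FinOp X)} (hC : IsLocalClone C) (hFC : F ⊆ C) :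
    cllClosure F ⊆ C := fun f hf => hf C ⟨hC, hFC⟩

theorem isClosed_eval (n : ℕ) (S : (Fin (n + 1) → X) → Set X) :
    letI : TopologicalSpace X := ⊥
    IsClosed {f : (Fin (n + 1) → X) → X | ∀ x, f x ∈ S x} := by
  letI : TopologicalSpace X := ⊥
  haveI : DiscreteTopology X := ⟨rfl⟩
  have h : {f : (Fin (n + 1) → X) → X | ∀ x, f x ∈ S x}
      = ⋂ x, (fun f : (Fin (n + 1) → X) → X => f x) ⁻¹' S x := by
    ext f; simp [Set.mem_iInter]
  rw [h]
  exact isClosed_iInter fun x => (isClosed_discrete _).preimage (continuous_apply x)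

/-- For a linear order without greatest element on the countably infinite set `X`:
if `f` has unbounded range and is not a projection then `f ∉ ⋃ₐ ⟨C_a⟩_loc`, and if `f` has
bounded range then `f ∉ ⋃ₐ ⟨D_a⟩_loc`. -/
theorem not_mem_union_closures (X : Type) [Countable X] [Infinite X] [LinearOrder X]
    (hnomax : ∀ a : X, ∃ b : X, a < b) (f : FinOp X) :
    ((¬ ∃ a : X, ∀ x, f.2 x ≤ a) → f ∉ projClone X →
        f ∉ ⋃ a : X, cllClosure {g : FinOp X | ∀ x, g.2 x ≤ a}) ∧
    ((∃ a : X, ∀ x, f.2 x ≤ a) →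
        f ∉ ⋃ a : X, cllClosure {g : FinOp X | ∀ x, a ≤ maxT x → maxT x ≤ g.2 x}) := by
  constructor
  · intro hub hproj hmem
    obtain ⟨a, hmem⟩ := Set.mem_iUnion.1 hmem
    -- the local clone C_a ∪ projClone
    have hloc : IsLocalClone ({g : FinOp X | ∀ x, g.2 x ≤ a} ∪ projClone X) := by
      refine ⟨⟨fun n k => Or.inr ⟨k, rfl⟩, ?_⟩, ?_⟩
      · rintro n m F G hF hG
        rcases hF with hF | ⟨k, hk⟩
        · exact Or.inl fun x => hF _
        · have hk' : F = fun x => x k := hk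
          have heq : (fun x => F fun i => G i x) = G k := by
            funext x; rw [hk']
          rw [show (⟨m, fun x => F fun i => G i x⟩ : FinOp X) = ⟨m, G k⟩ from by rw [heq]]
          exact hG k
      · intro n
        letI : TopologicalSpace X := ⊥
        show IsClosed {F : (Fin (n + 1) → X) → X |
            (⟨n, F⟩ : FinOp X) ∈ {g : FinOp X | ∀ x, g.2 x ≤ a} ∪ projClone X}
        have h1 : {F : (Fin (n + 1) → X) → X |
            (⟨n, F⟩ : FinOp X) ∈ {g : FinOp X | ∀ x, g.2 x ≤ a} ∪ projClone X}
            = {F | ∀ x, F x ∈ Set.Iic a} ∪ ⋃ k : Fin (n + 1), {F | ∀ x, F x ∈ ({x k} : Set X)} := by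
          ext F
          simp only [Set.mem_union, Set.mem_setOf_eq, Set.mem_iUnion, Set.mem_Iic,
            Set.mem_singleton_iff, projClone]
          constructor
          · rintro (h | ⟨k, hk⟩)
            · exact Or.inl h
            · exact Or.inr ⟨k, fun x => congrFun hk x⟩
          · rintro (h | ⟨k, hk⟩)
            · exact Or.inl h
            · exact Or.inr ⟨k, funext hk⟩
        rw [h1]
        exact (isClosed_eval n _).union
          (isClosed_iUnion_of_finite fun k => isClosed_eval n _)
    have := cllClosure_subset_s6 hloc Set.subset_union_left hmem
    rcases this with h | h
    · exact hub ⟨a, h⟩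
    · exact hproj h
  · rintro ⟨c, hc⟩ hmem
    obtain ⟨a, hmem⟩ := Set.mem_iUnion.1 hmem
    obtain ⟨b, hb⟩ := hnomax (max a c)
    have hab : a ≤ b := le_of_lt (lt_of_le_of_lt (le_max_left _ _) hb)
    have hcb : c < b := lt_of_le_of_lt (le_max_right _ _) hb
    -- the local clone Q_b
    have hloc : IsLocalClone {g : FinOp X | ∀ x, (∀ i, b ≤ x i) → b ≤ g.2 x} := by
      refine ⟨⟨fun n k x hx => hx k, ?_⟩, ?_⟩
      · intro n m F G hF hG x hx
        exact hF (fun i => G i x) fun i => hG i x hx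
      · intro n
        letI : TopologicalSpace X := ⊥
        show IsClosed {F : (Fin (n + 1) → X) → X |
            (⟨n, F⟩ : FinOp X) ∈ {g : FinOp X | ∀ x, (∀ i, b ≤ x i) → b ≤ g.2 x}}
        exact isClosed_eval n fun x => {y | (∀ i, b ≤ x i) → b ≤ y}
    have hsub : {g : FinOp X | ∀ x, a ≤ maxT x → maxT x ≤ g.2 x}
        ⊆ {g : FinOp X | ∀ x, (∀ i, b ≤ x i) → b ≤ g.2 x} := by
      intro g hg x hx
      have hmax : b ≤ maxT x := le_trans (hx 0) (Finset.le_sup' x (Finset.mem_univ 0))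
      exact le_trans hmax (hg x (le_trans hab hmax))
    have hf := cllClosure_subset_s6 hloc hsub hmem
    have := hf (fun _ => b) (fun _ => le_refl b)
    exact absurd (le_trans this (hc _)) (not_le.2 hcb)
end

section
/- Let A be a nonempty finite subset of the countably infinite set X. Then the lattice Cl(A) of all clones on the finite set A (ordered by inclusion) is isomorphic to an interval of the complete lattice Cll(X) of local clones on X; explicitly, the map σ sending a clone C on A to the set of all finitary operations g on X whose restriction to the appropriate power of A agrees with some f ∈ C of the same arity is an order isomorphism from Cl(A) onto the interval [σ(projections on A), Pol({A})] of Cll(X). -/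
variable {X : Type}

/-- The map `σ` assigning to a clone `C` on the subset `A ⊆ X` the set of all finitary
operations on `X` agreeing on the appropriate power of `A` with some member of `C` of the
same arity. -/
def sigmaMap {X : Type} (A : Set X) (C : Set (FinOp ↥A)) : Set (FinOp X) :=
  {g | ∃ f : (Fin (g.1 + 1) → ↥A) → ↥A, (⟨g.1, f⟩ : FinOp ↥A) ∈ C ∧
    ∀ x : Fin (g.1 + 1) → ↥A, g.2 (fun i => (x i : X)) = (f x : X)}

/-- `Pol({A})`: all finitary operations on `X` preserving the unary relation `A`. -/
def unaryPol {X : Type} (A : Set X) : Set (FinOp X) :=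
  Polymorphisms {(⟨0, {x | x 0 ∈ A}⟩ : FinRel X)}

/-!
Membership of an operation on `X` in `σ(C)` depends only on its restriction to the finite set
`A^(n+1)`; hence the `n`-ary part of `σ(C)` is the preimage of a set under a continuous map into
a discrete space, so it is closed. Every operation on `A` has an extension to `X`, so `σ` reflects
inclusion. Conversely, a clone `D` with `σ(projections) ⊆ D ⊆ Pol({A})` is `σ` of its trace on
`A`: if `g ∈ D` and `g'` agree on `A^(n+1)`, then `g' x = t (g x, x)` for the patching operation
`t (z₀, z) = z₀` if `z ∈ A^(n+1)` and `g' z` otherwise, which lies in `σ(projections)`.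
-/

section

variable {A : Set X}

def RestrictsTo {n : ℕ} (g : (Fin (n + 1) → X) → X) (f : (Fin (n + 1) → A) → A) : Prop :=
  ∀ x : Fin (n + 1) → A, g (fun i => x i) = f x

theorem RestrictsTo.comp {n m : ℕ} {g : (Fin (n + 1) → X) → X} {f : (Fin (n + 1) → A) → A}
    {gs : Fin (n + 1) → (Fin (m + 1) → X) → X} {fs : Fin (n + 1) → (Fin (m + 1) → A) → A}
    (hg : RestrictsTo g f) (hgs : ∀ i, RestrictsTo (gs i) (fs i)) :
    RestrictsTo (fun x => g fun i => gs i x) (fun x => f fun i => fs i x) := fun x =>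
  (congrArg g (funext fun i => hgs i x)).trans (hg _)

theorem RestrictsTo.unique {n : ℕ} {g : (Fin (n + 1) → X) → X} {f f' : (Fin (n + 1) → A) → A}
    (hf : RestrictsTo g f) (hf' : RestrictsTo g f') : f = f' :=
  funext fun x => Subtype.ext ((hf x).symm.trans (hf' x))

open Classical in
noncomputable def extendOp {n : ℕ} (f : (Fin (n + 1) → A) → A) : (Fin (n + 1) → X) → X := fun x =>
  if h : ∀ i, x i ∈ A then f fun i => ⟨x i, h i⟩ else x 0

theorem restrictsTo_extendOp {n : ℕ} (f : (Fin (n + 1) → A) → A) :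
    RestrictsTo (extendOp f) f := fun x => by
  simp [extendOp]

theorem IsClone.projClone_subset {C : Set (FinOp X)} (hC : IsClone C) : projClone X ⊆ C := by
  rintro ⟨n, f⟩ ⟨k, hk : f = fun x => x k⟩
  rw [hk]
  exact hC.1 n k

theorem IsClone.comp_cons {C : Set (FinOp X)} (hC : IsClone C) {n : ℕ}
    {t : (Fin (n + 2) → X) → X} {g : (Fin (n + 1) → X) → X}
    (ht : (⟨n + 1, t⟩ : FinOp X) ∈ C) (hg : (⟨n, g⟩ : FinOp X) ∈ C) :
    (⟨n, fun x => t (Fin.cons (g x) x)⟩ : FinOp X) ∈ C := by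
  have hcomp := hC.2 (n + 1) n t (Fin.cons g fun j x => x j) ht
    (Fin.cases hg fun j => hC.1 n j)
  convert hcomp using 4 with x
  funext i
  cases i using Fin.cases <;> rfl

theorem isClosed_sigmaMap_fragment (hA : A.Finite) (C : Set (FinOp A)) (n : ℕ) :
    letI : TopologicalSpace X := ⊥
    IsClosed {f : (Fin (n + 1) → X) → X | (⟨n, f⟩ : FinOp X) ∈ sigmaMap A C} := by
  let _ : TopologicalSpace X := ⊥
  have : DiscreteTopology X := ⟨rfl⟩
  have : Finite A := hA
  have hrestrict : Continuous fun (g : (Fin (n + 1) → X) → X) (x : Fin (n + 1) → A) =>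
      g fun i => x i :=
    continuous_pi fun x => continuous_apply _
  exact (isClosed_discrete {h : (Fin (n + 1) → A) → X |
    ∃ f, (⟨n, f⟩ : FinOp A) ∈ C ∧ ∀ x, h x = f x}).preimage hrestrict

theorem isClone_sigmaMap {C : Set (FinOp A)} (hC : IsClone C) : IsClone (sigmaMap A C) := by
  refine ⟨fun n k => ⟨fun x => x k, hC.1 n k, fun _ => rfl⟩, ?_⟩
  rintro n m g gs ⟨f, hf, hgf⟩ hgs
  choose fs hfs hgfs using hgs
  exact ⟨_, hC.2 n m f fs hf hfs, RestrictsTo.comp hgf hgfs⟩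

theorem sigmaMap_mono {C D : Set (FinOp A)} (h : C ⊆ D) : sigmaMap A C ⊆ sigmaMap A D :=
  fun _ ⟨f, hf, hgf⟩ => ⟨f, h hf, hgf⟩

theorem sigmaMap_subset_unaryPol (C : Set (FinOp A)) : sigmaMap A C ⊆ unaryPol A := by
  rintro ⟨n, g⟩ ⟨f, -, hgf⟩ ρ hρ r hr
  obtain rfl := Set.mem_singleton_iff.mp hρ
  have hgf' : RestrictsTo g f := hgf
  show g (fun i => r i 0) ∈ A
  exact (hgf' fun i => ⟨r i 0, hr i⟩) ▸ (f _).2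

theorem subset_of_sigmaMap_subset {C D : Set (FinOp A)} (h : sigmaMap A C ⊆ sigmaMap A D) :
    C ⊆ D := by
  rintro ⟨n, f⟩ hf
  obtain ⟨f', hf', hf'g⟩ := h (show (⟨n, extendOp f⟩ : FinOp X) ∈ sigmaMap A C from
    ⟨f, hf, restrictsTo_extendOp f⟩)
  obtain rfl := (restrictsTo_extendOp f).unique hf'g
  exact hf'

def traceOn (A : Set X) (D : Set (FinOp X)) : Set (FinOp A) :=
  {f | ∃ g, (⟨f.1, g⟩ : FinOp X) ∈ D ∧ RestrictsTo g f.2}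

theorem isClone_traceOn {D : Set (FinOp X)} (hD : IsClone D) : IsClone (traceOn A D) := by
  refine ⟨fun n k => ⟨fun x => x k, hD.1 n k, fun _ => rfl⟩, ?_⟩
  rintro n m f fs ⟨g, hg, hgf⟩ hfs
  choose gs hgs hgfs using hfs
  exact ⟨_, hD.2 n m g gs hg hgs, RestrictsTo.comp hgf hgfs⟩

theorem IsClone.mem_of_restrictsTo {D : Set (FinOp X)} (hD : IsClone D)
    (hproj : sigmaMap A (projClone A) ⊆ D) {n : ℕ} {g g' : (Fin (n + 1) → X) → X}
    {f : (Fin (n + 1) → A) → A} (hg : (⟨n, g⟩ : FinOp X) ∈ D) (hgf : RestrictsTo g f)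
    (hg'f : RestrictsTo g' f) : (⟨n, g'⟩ : FinOp X) ∈ D := by
  classical
  let t : (Fin (n + 2) → X) → X := fun z =>
    if ∀ i : Fin (n + 1), z i.succ ∈ A then z 0 else g' fun i => z i.succ
  have ht : (⟨n + 1, t⟩ : FinOp X) ∈ D :=
    hproj ⟨fun x => x 0, ⟨0, rfl⟩, fun x => if_pos fun i : Fin (n + 1) => (x i.succ).2⟩
  convert hD.comp_cons ht hg using 2
  funext x
  by_cases hx : ∀ i, x i ∈ A
  · simpa [t, hx] using ((hgf fun i => ⟨x i, hx i⟩).trans (hg'f _).symm).symm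
  · simp [t, hx]

theorem sigmaMap_traceOn_subset {D : Set (FinOp X)} (hD : IsClone D)
    (hproj : sigmaMap A (projClone A) ⊆ D) : sigmaMap A (traceOn A D) ⊆ D := by
  rintro ⟨n, g'⟩ ⟨f, ⟨g, hg, hgf⟩, hg'f⟩
  exact hD.mem_of_restrictsTo hproj hg hgf hg'f

theorem subset_sigmaMap_traceOn {D : Set (FinOp X)} (hpol : D ⊆ unaryPol A) :
    D ⊆ sigmaMap A (traceOn A D) := by
  rintro ⟨n, g⟩ hg
  have hgA : ∀ x : Fin (n + 1) → A, g (fun i => x i) ∈ A := fun x =>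
    hpol hg _ rfl (fun i _ => x i) fun i => (x i).2
  exact ⟨fun x => ⟨_, hgA x⟩, ⟨g, hg, fun _ => rfl⟩, fun _ => rfl⟩

end

theorem cloneLattice_iso_interval_general (X : Type) (A : Set X) (hfin : A.Finite) :
    (∀ C : Set (FinOp ↥A), IsClone C → IsLocalClone (sigmaMap A C)) ∧
    (∀ C : Set (FinOp ↥A), IsClone C →
      sigmaMap A (projClone ↥A) ⊆ sigmaMap A C ∧ sigmaMap A C ⊆ unaryPol A) ∧
    (∀ C D : Set (FinOp ↥A), IsClone C → IsClone D → (C ⊆ D ↔ sigmaMap A C ⊆ sigmaMap A D)) ∧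
    (∀ D : Set (FinOp X), IsLocalClone D →
      sigmaMap A (projClone ↥A) ⊆ D → D ⊆ unaryPol A →
      ∃ C : Set (FinOp ↥A), IsClone C ∧ sigmaMap A C = D) :=
  ⟨fun C hC => ⟨isClone_sigmaMap hC, isClosed_sigmaMap_fragment hfin C⟩,
    fun C hC => ⟨sigmaMap_mono hC.projClone_subset, sigmaMap_subset_unaryPol C⟩,
    fun _ _ _ _ => ⟨sigmaMap_mono, subset_of_sigmaMap_subset⟩,
    fun D hD hproj hpol => ⟨traceOn A D, isClone_traceOn hD.1,
      (sigmaMap_traceOn_subset hD.1 hproj).antisymm (subset_sigmaMap_traceOn hpol)⟩⟩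

/-- For a nonempty finite subset `A` of the countably infinite set `X`, the map `σ`
is an order isomorphism from the lattice of clones on `A` onto the interval
`[σ(projections on A), Pol({A})]` of the lattice of local clones on `X`. -/
theorem cloneLattice_iso_interval (X : Type) [Countable X] [Infinite X]
    (A : Set X) (hfin : A.Finite) (hne : A.Nonempty) :
    (∀ C : Set (FinOp ↥A), IsClone C → IsLocalClone (sigmaMap A C)) ∧
    (∀ C : Set (FinOp ↥A), IsClone C →
      sigmaMap A (projClone ↥A) ⊆ sigmaMap A C ∧ sigmaMap A C ⊆ unaryPol A) ∧
    (∀ C D : Set (FinOp ↥A), IsClone C → IsClone D → (C ⊆ D ↔ sigmaMap A C ⊆ sigmaMap A D)) ∧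
    (∀ D : Set (FinOp X), IsLocalClone D →
      sigmaMap A (projClone ↥A) ⊆ D → D ⊆ unaryPol A →
      ∃ C : Set (FinOp ↥A), IsClone C ∧ sigmaMap A C = D) :=
  cloneLattice_iso_interval_general X A hfin
end

section
/- Let A be a nonempty finite subset of the countably infinite set X, and for a clone C on A let σ(C) be the set of all n-ary operations g on X (for all n) that agree on A^n with some n-ary f ∈ C. Then σ(C) is a local clone on X for every clone C on A. -/
variable {X : Type}

/-- For a nonempty finite subset `A` of the countably infinite set `X`,
`σ(C)` is a local clone on `X` for every clone `C` on `A`. -/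
theorem sigmaMap_isLocalClone (X : Type) [Countable X] [Infinite X]
    (A : Set X) (hfin : A.Finite) (hne : A.Nonempty)
    (C : Set (FinOp ↥A)) (hC : IsClone C) : IsLocalClone (sigmaMap A C) := by
  haveI : Finite ↥A := hfin.to_subtype
  constructor
  · constructor
    · intro n k
      exact ⟨fun x => x k, hC.1 n k, fun x => rfl⟩
    · rintro n m f g ⟨f', hf'C, hf'⟩ hg
      choose g' hg'C hg' using hg
      refine ⟨fun x => f' fun i => g' i x, hC.2 n m f' g' hf'C hg'C, fun x => ?_⟩
      have : (fun i => g i fun j => (x j : X)) = fun i => ((g' i x : X)) := by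
        funext i; exact hg' i x
      simp only [this]
      exact hf' (fun i => g' i x)
  · intro n
    letI : TopologicalSpace X := ⊥
    haveI : DiscreteTopology X := ⟨rfl⟩
    have hrestr : Continuous (fun (g : (Fin (n + 1) → X) → X) =>
        (fun x : Fin (n + 1) → ↥A => g fun i => (x i : X))) :=
      continuous_pi fun x => continuous_apply _
    have : {f : (Fin (n + 1) → X) → X | (⟨n, f⟩ : FinOp X) ∈ sigmaMap A C} =
        (fun (g : (Fin (n + 1) → X) → X) =>
          (fun x : Fin (n + 1) → ↥A => g fun i => (x i : X))) ⁻¹'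
        {h : (Fin (n + 1) → ↥A) → X | ∃ f : (Fin (n + 1) → ↥A) → ↥A,
          (⟨n, f⟩ : FinOp ↥A) ∈ C ∧ ∀ x, h x = (f x : X)} := by
      ext g
      simp only [Set.mem_setOf_eq, Set.mem_preimage, sigmaMap]
    rw [this]
    exact (isClosed_discrete _).preimage hrestr
end

section
/- Let A be a nonempty finite subset of the countably infinite set X, and for a clone C on A let σ(C) be the set of all n-ary operations g on X that agree on A^n with some n-ary f ∈ C. Then every clone D on X with σ(J_A) ⊆ D ⊆ Pol({A}), where J_A is the clone of projections on A, equals σ(C) for some clone C on A (namely, C is the set of restrictions of operations of D to powers of A). -/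
variable {X : Type}

/-- For a nonempty finite subset `A ⊆ X`, every clone `D` on `X` with
`σ(J_A) ⊆ D ⊆ Pol({A})` equals `σ(C)` where `C` is the clone of restrictions of the
operations of `D` to powers of `A`. -/
theorem interval_clones_are_sigma (X : Type) [Countable X] [Infinite X]
    (A : Set X) (hfin : A.Finite) (hne : A.Nonempty)
    (D : Set (FinOp X)) (hD : IsClone D)
    (h₁ : sigmaMap A (projClone ↥A) ⊆ D) (h₂ : D ⊆ unaryPol A) :
    IsClone {f : FinOp ↥A | ∃ g : (Fin (f.1 + 1) → X) → X, (⟨f.1, g⟩ : FinOp X) ∈ D ∧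
        ∀ x : Fin (f.1 + 1) → ↥A, (f.2 x : X) = g fun i => (x i : X)} ∧
    sigmaMap A {f : FinOp ↥A | ∃ g : (Fin (f.1 + 1) → X) → X, (⟨f.1, g⟩ : FinOp X) ∈ D ∧
        ∀ x : Fin (f.1 + 1) → ↥A, (f.2 x : X) = g fun i => (x i : X)} = D := by
  classical
  have hproj : ∀ (n : ℕ) (k : Fin (n+1)), (⟨n, fun x => x k⟩ : FinOp X) ∈ D := by
    intro n k
    exact h₁ ⟨fun x => x k, ⟨k, rfl⟩, fun x => rfl⟩
  constructor
  · constructor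
    · intro n k
      exact ⟨fun x => x k, hproj n k, fun x => rfl⟩
    · rintro n m f g ⟨f', hf'D, hf'⟩ hg
      choose g' hg'D hg' using hg
      refine ⟨fun x => f' fun i => g' i x, hD.2 n m f' g' hf'D hg'D, ?_⟩
      intro x
      rw [hf']
      congr 1
      funext i
      exact hg' i x
  · apply Set.Subset.antisymm
    · rintro ⟨n, gX⟩ ⟨f, ⟨g', hg'D, hg'⟩, hagree⟩
      set F : (Fin (n+1+1) → X) → X :=
        fun z => if ∀ i, z i ∈ A then z 0 else gX (fun i => z i.succ) with hF
      have hFD : (⟨n+1, F⟩ : FinOp X) ∈ D := by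
        apply h₁
        refine ⟨fun x => x 0, ⟨0, rfl⟩, ?_⟩
        intro x
        simp only [hF]
        rw [if_pos]
        exact fun i => (x i).2
      have hGD : ∀ i : Fin (n+1+1),
          (⟨n, Fin.cases g' (fun k (x : Fin (n+1) → X) => x k) i⟩ : FinOp X) ∈ D := by
        intro i
        induction i using Fin.cases with
        | zero => simpa using hg'D
        | succ k => simpa using hproj n k
      have hcomp := hD.2 (n+1) n F (Fin.cases g' fun k x => x k) hFD hGD
      convert hcomp using 2
      funext x
      simp only [hF]
      by_cases h : ∀ i : Fin (n+1), x i ∈ A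
      · have hx : (fun i => ((fun i => (⟨x i, h i⟩ : ↥A)) i : X)) = x := rfl
        have h2 : ((f fun i => ⟨x i, h i⟩ : ↥A) : X) = g' x := hg' (fun i => ⟨x i, h i⟩)
        have hg'A : g' x ∈ A := h2 ▸ (f fun i => ⟨x i, h i⟩).2
        rw [if_pos]
        · have h1 : gX x = ((f fun i => ⟨x i, h i⟩ : ↥A) : X) := hagree (fun i => ⟨x i, h i⟩)
          simp only [Fin.cases_zero]
          exact h1.trans h2
        · intro i
          induction i using Fin.cases with
          | zero => simpa using hg'A
          | succ k => simpa using h k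
      · rw [if_neg]
        · simp
        · push_neg at h
          obtain ⟨i, hi⟩ := h
          intro hall
          exact hi (by simpa using hall i.succ)
    · rintro ⟨n, gX⟩ hg
      have hA : ∀ x : Fin (n+1) → ↥A, gX (fun i => (x i : X)) ∈ A := by
        intro x
        have hp := h₂ hg ⟨0, {y : Fin 1 → X | y 0 ∈ A}⟩ rfl
        have := hp (fun i _ => (x i : X)) (fun i => (x i).2)
        exact this
      exact ⟨fun x => ⟨gX fun i => x i, hA x⟩, ⟨gX, hg, fun x => rfl⟩, fun x => rfl⟩
end

section
/- The lattice Cll(X) of local clones on a countably infinite set X does not embed as a lattice into the clone lattice Cl(A) over any finite set A; i.e., for no finite set A is there an injective map from Cll(X) to Cl(A) preserving binary meets and joins. -/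
variable {X : Type}

/-- The clone generated by a set of finitary operations. -/
def cloneClosure {X : Type} (F : Set (FinOp X)) : Set (FinOp X) :=
  ⋂₀ {C : Set (FinOp X) | IsClone C ∧ F ⊆ C}


/-!
For `S ⊆ ℕ`, let `f_S` append the bit `[|w| ∈ S]` to a binary word `w`, transported to `X` through
a bijection `X ≃ {0,1}^{<ω}`. The clones `C_S` of operations `x ↦ f_S^k (x_j)` are local, since
such an operation is determined by its values at two fixed points, and any two of them meet in the
projection clone, since `f_S^k = f_T^l` forces `k = 0` when `S ≠ T`. A meet-preserving injection
`σ` would therefore make the sets `σ C_S \ σ (projections)` pairwise disjoint and, with at most one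
exception, nonempty. This is impossible: there are continuum many `S`, but only countably many
operations on a finite set.
-/

open Function

theorem countable_of_injective_of_pairwise_inter_eq {ι α : Type*} [Countable α]
    {F : ι → Set α} {B : Set α} (hF : Injective F) (hB : Pairwise fun i j => F i ∩ F j = B) :
    Countable ι := by
  have hsub : {i | F i ⊆ B}.Subsingleton := fun i hi j hj => by
    by_contra hij
    exact hij (hF ((hi.trans (hB hij ▸ Set.inter_subset_right)).antisymm
      (hj.trans (hB hij ▸ Set.inter_subset_left))))
  have hdiff : {i | ¬ F i ⊆ B}.Countable := by
    choose a ha using fun i : {i | ¬ F i ⊆ B} => Set.not_subset.mp i.2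
    refine Set.countable_coe_iff.mp (Injective.countable (f := a) fun i j hij => ?_)
    by_contra hne
    exact (ha j).2 (hB (Subtype.coe_injective.ne hne) ▸ ⟨hij ▸ (ha i).1, (ha j).1⟩)
  exact Set.countable_univ_iff.mp ((hsub.countable.union hdiff).mono fun i _ => em _)

theorem uncountable_set_nat : Uncountable (Set ℕ) :=
  uncountable_iff_forall_not_surjective.2 cantor_surjective

theorem isClosed_of_eqOn_finite_imp_eq {ι α : Type*} [TopologicalSpace α] [DiscreteTopology α]
    {S : Set (ι → α)} {T : Set ι} (hT : T.Finite)
    (hS : ∀ s ∈ S, ∀ s' ∈ S, Set.EqOn s s' T → s = s') : IsClosed S := by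
  refine isClosed_of_closure_subset fun h hh => ?_
  have agree : ∀ U : Set ι, U.Finite → ∃ s ∈ S, Set.EqOn s h U := by
    intro U hU
    have hopen : IsOpen (⋂ i ∈ U, (fun g : ι → α => g i) ⁻¹' {h i}) :=
      hU.isOpen_biInter fun i _ => (isOpen_discrete _).preimage (continuous_apply i)
    obtain ⟨s, hs, hsS⟩ := mem_closure_iff.mp hh _ hopen (by simp)
    exact ⟨s, hsS, fun i hi => by simpa using Set.mem_iInter₂.mp hs i hi⟩
  obtain ⟨s₀, hs₀, hs₀h⟩ := agree T hT
  suffices s₀ = h from this ▸ hs₀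
  funext x
  obtain ⟨s, hs, hsh⟩ := agree (insert x T) (hT.insert x)
  have hss₀ : s = s₀ :=
    hS s hs s₀ hs₀ fun i hi => (hsh (Set.mem_insert_of_mem x hi)).trans (hs₀h hi).symm
  exact hss₀ ▸ hsh (Set.mem_insert x T)

section IterateClone

def iterateClone (f : X → X) : Set (FinOp X) :=
  {F | ∃ (k : ℕ) (j : Fin (F.1 + 1)), F.2 = fun x => f^[k] (x j)}

theorem mem_iterateClone {f : X → X} {n : ℕ} {F : (Fin (n + 1) → X) → X} :
    (⟨n, F⟩ : FinOp X) ∈ iterateClone f ↔ ∃ (k : ℕ) (j : Fin (n + 1)), F = fun x => f^[k] (x j) :=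
  Iff.rfl

theorem isClone_iterateClone (f : X → X) : IsClone (iterateClone f) := by
  refine ⟨fun n k => ⟨0, k, rfl⟩, ?_⟩
  intro n m F G hF hG
  obtain ⟨k, j, rfl⟩ := mem_iterateClone.1 hF
  obtain ⟨l, j', hG'⟩ := mem_iterateClone.1 (hG j)
  refine mem_iterateClone.2 ⟨k + l, j', funext fun x => ?_⟩
  show f^[k] (G j x) = _
  rw [hG', iterate_add_apply]

variable {f g : X → X} {p : X}

theorem isLocalClone_iterateClone (hp : Injective fun k => f^[k] p) :
    IsLocalClone (iterateClone f) := by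
  refine ⟨isClone_iterateClone f, fun n => ?_⟩
  let _ : TopologicalSpace X := ⊥
  have _ : DiscreteTopology X := ⟨rfl⟩
  refine isClosed_of_eqOn_finite_imp_eq
    (T := {fun _ => p, fun i : Fin (n + 1) => f^[i] p}) (Set.toFinite _) ?_
  intro s hs s' hs' hTeq
  obtain ⟨k, j, rfl⟩ := mem_iterateClone.1 hs
  obtain ⟨k', j', rfl⟩ := mem_iterateClone.1 hs'
  have hk : k = k' := hp (hTeq (Set.mem_insert _ _))
  have hj : k + j = k' + j' := hp <| by
    simpa only [iterate_add_apply] using hTeq (Set.mem_insert_of_mem _ rfl)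
  obtain rfl : j = j' := Fin.ext (by omega)
  rw [hk]

theorem iterateClone_inter (hp : Injective fun k => f^[k] p)
    (hfg : ∀ k l, f^[k] = g^[l] → k = 0) : iterateClone f ∩ iterateClone g = projClone X := by
  ext ⟨n, F⟩
  constructor
  · rintro ⟨hf, hg⟩
    obtain ⟨k, j, hF⟩ := mem_iterateClone.1 hf
    obtain ⟨l, j', hG⟩ := mem_iterateClone.1 hg
    have key : ∀ x : Fin (n + 1) → X, f^[k] (x j) = g^[l] (x j') := congrFun (hF.symm.trans hG)
    obtain rfl : j = j' := by
      by_contra hne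
      have h₁ := key fun _ => p
      have h₂ := key (update (fun _ => p) j (f p))
      rw [update_self, update_of_ne (Ne.symm hne), ← h₁, ← iterate_succ_apply] at h₂
      exact absurd (hp h₂) k.succ_ne_self
    obtain rfl : k = 0 := hfg k l (funext fun u => key fun _ => u)
    exact ⟨j, hF⟩
  · rintro ⟨j, hF⟩
    exact ⟨⟨0, j, hF⟩, ⟨0, j, hF⟩⟩

theorem iterateClone_ne_projClone (hp : Injective fun k => f^[k] p) :
    iterateClone f ≠ projClone X := by
  intro h
  have hf : (⟨0, fun x => f (x 0)⟩ : FinOp X) ∈ projClone X := h ▸ ⟨1, 0, rfl⟩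
  obtain ⟨j, hj⟩ := hf
  exact one_ne_zero (hp (congrFun hj fun _ => p))

theorem iterateClone_ne (hp : Injective fun k => f^[k] p)
    (hfg : ∀ k l, f^[k] = g^[l] → k = 0) : iterateClone f ≠ iterateClone g := fun h =>
  iterateClone_ne_projClone hp (by rw [← iterateClone_inter hp hfg, ← h, Set.inter_self])

end IterateClone

noncomputable def appendBit (S : Set ℕ) (w : List Bool) : List Bool :=
  w ++ [S.boolIndicator w.length]

theorem appendBit_iterate (S : Set ℕ) (k : ℕ) (w : List Bool) :
    (appendBit S)^[k] w = w ++ List.ofFn fun i : Fin k => S.boolIndicator (w.length + i) := by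
  induction k with
  | zero => simp
  | succ k ih =>
    rw [iterate_succ_apply', ih, appendBit, List.ofFn_succ']
    simp only [List.length_append, List.length_ofFn, List.concat_eq_append, List.append_assoc,
      Fin.val_castSucc, Fin.val_last]

theorem injective_appendBit_iterate_nil (S : Set ℕ) :
    Injective fun k => (appendBit S)^[k] [] := fun k l h => by
  simpa [appendBit_iterate] using congrArg List.length h

theorem appendBit_iterate_eq {S T : Set ℕ} {k l : ℕ}
    (h : (appendBit S)^[k] = (appendBit T)^[l]) : k = 0 ∨ S = T := by
  obtain rfl : k = l := by simpa [appendBit_iterate] using congrArg List.length (congrFun h [])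
  rcases k with _ | k
  · exact .inl rfl
  refine .inr (Set.ext fun m => ?_)
  have hm := congrFun h (List.replicate m false)
  rw [appendBit_iterate, appendBit_iterate, List.append_cancel_left_eq, List.ofFn_inj] at hm
  simpa [Set.mem_iff_boolIndicator] using congrFun hm 0

theorem exists_family_with_independent_iterates (X : Type) [Countable X] [Infinite X] :
    ∃ (f : Set ℕ → X → X) (p : X), (∀ S, Injective fun k => (f S)^[k] p) ∧
      ∀ S T, S ≠ T → ∀ k l, (f S)^[k] = (f T)^[l] → k = 0 := by
  obtain ⟨e⟩ : Nonempty (X ≃ List Bool) := by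
    obtain ⟨_⟩ := nonempty_denumerable X
    obtain ⟨_⟩ := nonempty_denumerable (List Bool)
    exact ⟨(Denumerable.eqv X).trans (Denumerable.eqv (List Bool)).symm⟩
  have conj : ∀ S k w, (e.symm ∘ appendBit S ∘ e)^[k] (e.symm w) = e.symm ((appendBit S)^[k] w) :=
    fun S k w => ((Semiconj.iterate_right (fun w => by simp) k) w).symm
  refine ⟨fun S => e.symm ∘ appendBit S ∘ e, e.symm [], fun S k l hkl => ?_,
    fun S T hST k l h => ?_⟩
  · simp only [conj] at hkl
    exact injective_appendBit_iterate_nil S (e.symm.injective hkl)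
  · have hiter : (appendBit S)^[k] = (appendBit T)^[l] :=
      funext fun w => e.symm.injective (by rw [← conj, ← conj]; exact congrFun h _)
    exact (appendBit_iterate_eq hiter).resolve_right hST

/-- The lattice of local clones on a countably infinite set `X` does not embed
as a lattice into the clone lattice over any finite set `A`: there is no injective map from
local clones on `X` to clones on `A` preserving binary meets (intersections) and binary joins
(generated (local) clones of unions). -/
theorem no_lattice_embedding_into_finite_cloneLattice
    (X : Type) [Countable X] [Infinite X] (A : Type) [Finite A] :
    ¬ ∃ σ : Set (FinOp X) → Set (FinOp A),
        (∀ C : Set (FinOp X), IsLocalClone C → IsClone (σ C)) ∧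
        Set.InjOn σ {C : Set (FinOp X) | IsLocalClone C} ∧
        (∀ C D : Set (FinOp X), IsLocalClone C → IsLocalClone D →
          σ (C ∩ D) = σ C ∩ σ D ∧
          σ (cllClosure (C ∪ D)) = cloneClosure (σ C ∪ σ D)) := by
  rintro ⟨σ, -, hinj, hlat⟩
  obtain ⟨f, p, hp, hfree⟩ := exists_family_with_independent_iterates X
  have hloc : ∀ S, IsLocalClone (iterateClone (f S)) := fun S => isLocalClone_iterateClone (hp S)
  have hσinj : Injective fun S => σ (iterateClone (f S)) := fun S T h => by
    by_contra hST
    exact iterateClone_ne (hp S) (hfree S T hST) (hinj (hloc S) (hloc T) h)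
  have hσmeet : Pairwise fun S T => σ (iterateClone (f S)) ∩ σ (iterateClone (f T)) =
      σ (projClone X) := fun S T hST => by
    dsimp only
    rw [← (hlat _ _ (hloc S) (hloc T)).1, iterateClone_inter (hp S) (hfree S T hST)]
  exact (not_countable_iff.mpr uncountable_set_nat)
    (countable_of_injective_of_pairwise_inter_eq hσinj hσmeet)
end

section
/- The lattice Cll(X) of all local clones on a countably infinite set X has cardinality exactly 2^{ℵ₀}. -/
variable {X : Type}

-- auxiliary
lemma isClone_polymorphisms (R : Set (FinRel X)) : IsClone (Polymorphisms R) := by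
  constructor
  · intro n k ρ _ r hr
    exact hr k
  · intro n m f g hf hg ρ hρ r hr
    exact hf ρ hρ (fun i j => g i fun i2 => r i2 j) (fun i => hg i ρ hρ r hr)

def traceSet (C : Set (FinOp X)) :
    Set (Σ n : ℕ, Σ k : ℕ, (Fin k → Fin (n+1) → X) × (Fin k → X)) :=
  {d | ∃ f, (⟨d.1, f⟩ : FinOp X) ∈ C ∧ ∀ i, f (d.2.2.1 i) = d.2.2.2 i}

lemma subset_of_trace {C C' : Set (FinOp X)} (hC' : IsLocalClone C')
    (h : traceSet C ⊆ traceSet C') : C ⊆ C' := by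
  rintro ⟨n, f⟩ hf
  letI : TopologicalSpace X := ⊥
  haveI : DiscreteTopology X := ⟨rfl⟩
  have hcl := hC'.2 n
  have hmem : f ∈ closure {g : (Fin (n+1) → X) → X | (⟨n, g⟩ : FinOp X) ∈ C'} := by
    rw [mem_closure_iff]
    intro o ho hfo
    obtain ⟨I, u, h1, h2⟩ := isOpen_pi_iff.1 ho f hfo
    set eqv := I.equivFin with heqv
    set a : Fin I.card → (Fin (n+1) → X) := fun i => (eqv.symm i : Fin (n+1) → X) with ha
    have hd : (⟨n, I.card, a, fun i => f (a i)⟩ :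
        Σ n : ℕ, Σ k : ℕ, (Fin k → Fin (n+1) → X) × (Fin k → X)) ∈ traceSet C :=
      ⟨f, hf, fun i => rfl⟩
    obtain ⟨g, hg, hga⟩ := h hd
    refine ⟨g, h2 ?_, hg⟩
    intro x hx
    have hax : a (eqv ⟨x, hx⟩) = x := by simp [ha]
    have hgx : g (a (eqv ⟨x, hx⟩)) = f (a (eqv ⟨x, hx⟩)) := hga (eqv ⟨x, hx⟩)
    rw [hax] at hgx
    rw [hgx]
    exact (h1 x hx).2
  rw [hcl.closure_eq] at hmem
  exact hmem

def relS (e : ℕ ↪ X) (S : Set ℕ) : Set (FinRel X) :=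
  {ρ | ∃ m ∈ S, ρ = ⟨0, {v | v 0 ≠ e m}⟩}

lemma const_mem_iff (e : ℕ ↪ X) (S : Set ℕ) (n : ℕ) :
    (⟨0, fun _ => e n⟩ : FinOp X) ∈ Polymorphisms (relS e S) ↔ n ∉ S := by
  constructor
  · intro h hn
    have hp := h ⟨0, {v | v 0 ≠ e n}⟩ ⟨n, hn, rfl⟩
    have hrows : ∀ i : Fin 1, (fun _ : Fin 1 => e (n+1)) ∈ {v : Fin 1 → X | v 0 ≠ e n} := by
      intro i hcon
      exact (by omega : ¬ n + 1 = n) (e.injective hcon)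
    exact hp (fun _ _ => e (n+1)) hrows rfl
  · intro hn ρ hρ
    obtain ⟨m, hm, rfl⟩ := hρ
    intro r _ hcon
    exact hn (by rw [e.injective hcon]; exact hm)


/-- The lattice of all local clones on a countably infinite set `X` has
cardinality exactly `2^ℵ₀`. -/
theorem card_localClones (X : Type) [Countable X] [Infinite X] :
    Cardinal.mk {C : Set (FinOp X) // IsLocalClone C} = 2 ^ Cardinal.aleph0 := by
  apply le_antisymm
  · have hinj : Function.Injective
        (fun C : {C : Set (FinOp X) // IsLocalClone C} => traceSet C.1) := by
      rintro ⟨C, hC⟩ ⟨C', hC'⟩ h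
      simp only at h
      have h1 : C ⊆ C' := subset_of_trace hC' h.le
      have h2 : C' ⊆ C := subset_of_trace hC h.ge
      exact Subtype.ext (le_antisymm h1 h2)
    calc Cardinal.mk {C : Set (FinOp X) // IsLocalClone C}
        ≤ Cardinal.mk (Set (Σ n : ℕ, Σ k : ℕ, (Fin k → Fin (n+1) → X) × (Fin k → X))) :=
          Cardinal.mk_le_of_injective hinj
      _ = 2 ^ Cardinal.mk (Σ n : ℕ, Σ k : ℕ, (Fin k → Fin (n+1) → X) × (Fin k → X)) :=
          Cardinal.mk_set
      _ ≤ 2 ^ Cardinal.aleph0 :=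
          Cardinal.power_le_power_left (by norm_num) Cardinal.mk_le_aleph0
  · obtain e := Infinite.natEmbedding X
    have hinj : Function.Injective
        (fun S : Set ℕ => (⟨Polymorphisms (relS e S), isLocalClone_polymorphisms _⟩ :
          {C : Set (FinOp X) // IsLocalClone C})) := by
      intro S T h
      have h' : Polymorphisms (relS e S) = Polymorphisms (relS e T) := congrArg Subtype.val h
      ext n
      have := (const_mem_iff e S n).symm.trans (h' ▸ const_mem_iff e T n)
      tauto
    calc (2 : Cardinal) ^ Cardinal.aleph0
        = Cardinal.mk (Set ℕ) := by rw [Cardinal.mk_set, Cardinal.mk_nat]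
      _ ≤ Cardinal.mk {C : Set (FinOp X) // IsLocalClone C} := Cardinal.mk_le_of_injective hinj
end

section
/- There is a join-preserving embedding of the lattice M_{2^{ℵ₀}} into the lattice Cll(X) of local clones on a countably infinite set X: there exists a family (𝒞_i)_{i ∈ 2^{ℵ₀}} of pairwise distinct local clones on X, each properly containing the clone J of projections and properly contained in the clone O of all operations, such that for all i ≠ j the smallest local clone containing 𝒞_i ∪ 𝒞_j is O. (Explicitly, one may take 𝒞_i = Pol({A_i}) where (A_i)_{i ∈ 2^{ℵ₀}} enumerates the nonempty proper subsets of X.) -/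
variable {X : Type}

theorem mem_unaryPol {A : Set X} {n : ℕ} {f : (Fin (n + 1) → X) → X} :
    (⟨n, f⟩ : FinOp X) ∈ unaryPol A ↔ ∀ x : Fin (n + 1) → X, (∀ i, x i ∈ A) → f x ∈ A := by
  refine ⟨fun h x hx => h _ rfl (fun i _ => x i) hx, ?_⟩
  rintro h ρ rfl r hr
  exact h (fun i => r i 0) hr

theorem isClone_unaryPol (A : Set X) : IsClone (unaryPol A) :=
  ⟨fun _ k => mem_unaryPol.2 fun _ hx => hx k,
    fun _ _ _ _ hf hg => mem_unaryPol.2 fun x hx =>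
      mem_unaryPol.1 hf _ fun i => mem_unaryPol.1 (hg i) x hx⟩

theorem isLocalClone_unaryPol (A : Set X) : IsLocalClone (unaryPol A) := by
  refine ⟨isClone_unaryPol A, fun n => ?_⟩
  let : TopologicalSpace X := ⊥
  have : DiscreteTopology X := ⟨rfl⟩
  have hfrag : {f : (Fin (n + 1) → X) → X | (⟨n, f⟩ : FinOp X) ∈ unaryPol A} =
      ⋂ x ∈ {x : Fin (n + 1) → X | ∀ i, x i ∈ A}, (fun f => f x) ⁻¹' A := by
    ext f
    simp [mem_unaryPol]
  rw [hfrag]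
  exact isClosed_biInter fun x _ => (isClosed_discrete A).preimage (continuous_apply x)

theorem const_mem_unaryPol_iff {A : Set X} (hA : A.Nonempty) {a : X} {n : ℕ} :
    (⟨n, fun _ => a⟩ : FinOp X) ∈ unaryPol A ↔ a ∈ A := by
  obtain ⟨b, hb⟩ := hA
  exact ⟨fun h => mem_unaryPol.1 h (fun _ => b) fun _ => hb,
    fun ha => mem_unaryPol.2 fun _ _ => ha⟩

theorem unaryPol_injOn : Set.InjOn (unaryPol (X := X)) {A | A.Nonempty} := by
  intro A hA B hB h
  ext a
  rw [← const_mem_unaryPol_iff hA (n := 0), ← const_mem_unaryPol_iff hB (n := 0), h]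

theorem projClone_ssubset_unaryPol [Nontrivial X] {A : Set X} (hA : A.Nonempty) :
    projClone X ⊂ unaryPol A := by
  obtain ⟨a, ha⟩ := hA
  refine ⟨?_, fun hsub => ?_⟩
  · rintro ⟨n, f⟩ ⟨k, hk⟩
    exact mem_unaryPol.2 fun x hx => by
      rw [show f = fun x => x k from hk]
      exact hx k
  · have hconst : (⟨0, fun _ => a⟩ : FinOp X) ∈ unaryPol A :=
      (const_mem_unaryPol_iff ⟨a, ha⟩).2 ha
    obtain ⟨k, hk⟩ := hsub hconst
    obtain ⟨c, hc⟩ := exists_ne a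
    exact hc (congrFun hk fun _ => c).symm

theorem unaryPol_ssubset_univ {A : Set X} (hA : A.Nonempty) (hA' : A ≠ Set.univ) :
    unaryPol A ⊂ Set.univ := by
  obtain ⟨b, hb⟩ := (Set.ne_univ_iff_exists_notMem A).1 hA'
  exact Set.ssubset_univ_iff.2 fun h =>
    hb ((const_mem_unaryPol_iff hA (n := 0)).1 (h ▸ Set.mem_univ _))

/-- For `a ∈ A \ B` and `b ∈ B`, every `F` is `F x = G (x, a)` with
`G (x, y) = if y = a then F x else b`; here `G ∈ Pol({B})` and the constant `a ∈ Pol({A})`. -/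
theorem IsClone.eq_univ_of_unaryPol_subset {A B : Set X} {C : Set (FinOp X)} (hC : IsClone C)
    (hAC : unaryPol A ⊆ C) (hBC : unaryPol B ⊆ C) (hB : B.Nonempty) (hAB : ¬A ⊆ B) :
    C = Set.univ := by
  classical
  obtain ⟨a, haA, haB⟩ := Set.not_subset.1 hAB
  obtain ⟨b, hb⟩ := hB
  refine Set.eq_univ_of_forall fun ⟨n, F⟩ => ?_
  let G : (Fin (n + 2) → X) → X := fun y => if y (Fin.last _) = a then F (Fin.init y) else b
  let g : Fin (n + 2) → (Fin (n + 1) → X) → X := Fin.lastCases (fun _ => a) fun i x => x i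
  have hG : (⟨n + 1, G⟩ : FinOp X) ∈ C := hBC <| mem_unaryPol.2 fun y hy => by
    have : y (Fin.last _) ≠ a := fun h => haB (h ▸ hy _)
    simp [G, this, hb]
  have hg : ∀ i, (⟨n, g i⟩ : FinOp X) ∈ C := Fin.lastCases
    (by simpa [g] using hAC ((const_mem_unaryPol_iff ⟨a, haA⟩).2 haA))
    (fun i => by simpa [g] using hC.1 n i)
  have hF : (fun x => G fun i => g i x) = F := by
    funext x
    have hlast : g (Fin.last _) x = a := by simp [g]
    have hinit : Fin.init (fun i => g i x) = x := funext fun i => by simp [Fin.init, g]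
    simp [G, hlast, hinit]
  simpa [hF] using hC.2 _ _ G g hG hg

theorem cllClosure_unaryPol_union {A B : Set X} (hA : A.Nonempty) (hB : B.Nonempty)
    (hAB : A ≠ B) : cllClosure (unaryPol A ∪ unaryPol B) = Set.univ := by
  refine Set.eq_univ_of_forall fun f => Set.mem_sInter.2 ?_
  rintro C ⟨⟨hC, -⟩, hsub⟩
  obtain ⟨hAC, hBC⟩ := Set.union_subset_iff.1 hsub
  refine Set.eq_univ_iff_forall.1 ?_ f
  by_cases hAB' : A ⊆ B
  · exact hC.eq_univ_of_unaryPol_subset hBC hAC hA fun hBA => hAB (hAB'.antisymm hBA)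
  · exact hC.eq_univ_of_unaryPol_subset hAC hBC hB hAB'

theorem mk_nonempty_ne_univ [Infinite X] :
    Cardinal.mk {B : Set X // B.Nonempty ∧ B ≠ Set.univ} = Cardinal.mk (Set X) := by
  classical
  have h : {B : Set X | B.Nonempty ∧ B ≠ Set.univ} = (↑({∅, Set.univ} : Finset (Set X)))ᶜ := by
    ext B
    simp [Set.nonempty_iff_ne_empty]
  exact (congrArg (fun s : Set (Set X) => Cardinal.mk s) h).trans
    (Cardinal.mk_compl_finset_of_infinite _)

/-- There is a join-preserving embedding of `M_{2^ℵ₀}` into the lattice of local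
clones on the countably infinite set `X`: a family of `2^ℵ₀` pairwise distinct local clones,
each strictly between the clone of projections and the clone of all operations, any two
distinct ones of which join (in the local clone lattice) to the clone of all operations;
explicitly one may take the clones `Pol({A})` for `A` ranging over the nonempty proper
subsets of `X`. -/
theorem joinPreserving_M_continuum (X : Type) [Countable X] [Infinite X] :
    ∃ (ι : Type) (𝒞 : ι → Set (FinOp X)),
      Cardinal.mk ι = 2 ^ Cardinal.aleph0 ∧
      Function.Injective 𝒞 ∧
      (∀ i, IsLocalClone (𝒞 i) ∧ projClone X ⊂ 𝒞 i ∧ 𝒞 i ⊂ Set.univ) ∧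
      (∀ i j, i ≠ j → cllClosure (𝒞 i ∪ 𝒞 j) = Set.univ) ∧
      (∃ A : ι → Set X, Function.Injective A ∧
        Set.range A = {B : Set X | B.Nonempty ∧ B ≠ Set.univ} ∧
        ∀ i, 𝒞 i = unaryPol (A i)) := by
  refine ⟨{B : Set X // B.Nonempty ∧ B ≠ Set.univ}, fun A => unaryPol A.1, ?_,
    fun A B h => Subtype.ext (unaryPol_injOn A.2.1 B.2.1 h),
    fun A => ⟨isLocalClone_unaryPol _, projClone_ssubset_unaryPol A.2.1,
      unaryPol_ssubset_univ A.2.1 A.2.2⟩,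
    fun A B h => cllClosure_unaryPol_union A.2.1 B.2.1 (Subtype.coe_ne_coe.2 h),
    Subtype.val, Subtype.val_injective, Subtype.range_coe, fun _ => rfl⟩
  rw [mk_nonempty_ne_univ, Cardinal.mk_set, Cardinal.mk_eq_aleph0]
end

section
/- There is a meet-preserving embedding of the lattice M_{2^{ℵ₀}} into the lattice Cll(X) of local clones on a countably infinite set X: there exists a local clone 𝒞₀ and a family (𝒞_i)_{i ∈ 2^{ℵ₀}} of pairwise distinct local clones on X, each properly containing 𝒞₀ and properly contained in the clone O of all operations, such that 𝒞_i ∩ 𝒞_j = 𝒞₀ for all i ≠ j. (Explicitly, fixing distinct a,b ∈ X, one may take 𝒞₀ = ⟨{c_b}⟩_loc for the constant unary operation c_b with value b, and 𝒞_i = ⟨{f_{B_i}}⟩_loc where f_B maps elements of B to a and all other elements to b, as B ranges over the nonempty subsets of X∖{a,b}.) -/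
variable {X : Type}

section Aux

open Classical

variable {X : Type}

/-- The function mapping `B` to `a` and everything else to `b`. -/
noncomputable def fB (a b : X) (B : Set X) : X → X := fun x => if x ∈ B then a else b

/-- The clone generated by the constant `b`: projections plus constants `b`. -/
def D0 (b : X) : Set (FinOp X) :=
  {f | (∃ k : Fin (f.1 + 1), f.2 = fun x => x k) ∨ f.2 = fun _ => b}

/-- The clone generated by `f_B`. -/
noncomputable def DB (a b : X) (B : Set X) : Set (FinOp X) :=
  {f | (∃ k : Fin (f.1 + 1), f.2 = fun x => x k) ∨
       (∃ k : Fin (f.1 + 1), f.2 = fun x => fB a b B (x k)) ∨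
       f.2 = fun _ => b}

lemma mem_D0 {b : X} {n : ℕ} {f : (Fin (n + 1) → X) → X} :
    (⟨n, f⟩ : FinOp X) ∈ D0 b ↔
      (∃ k : Fin (n + 1), f = fun x => x k) ∨ f = fun _ => b := Iff.rfl

lemma mem_DB {a b : X} {B : Set X} {n : ℕ} {f : (Fin (n + 1) → X) → X} :
    (⟨n, f⟩ : FinOp X) ∈ DB a b B ↔
      (∃ k : Fin (n + 1), f = fun x => x k) ∨
      (∃ k : Fin (n + 1), f = fun x => fB a b B (x k)) ∨
      f = fun _ => b := Iff.rfl

lemma fB_mem {a b : X} {B : Set X} {x : X} (hx : x ∈ B) : fB a b B x = a := if_pos hx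

lemma fB_not_mem {a b : X} {B : Set X} {x : X} (hx : x ∉ B) : fB a b B x = b := if_neg hx

lemma fB_fB {a b : X} {B : Set X} (ha : a ∉ B) (hb : b ∉ B) (x : X) :
    fB a b B (fB a b B x) = b := by
  by_cases h : x ∈ B
  · rw [fB_mem h, fB_not_mem ha]
  · rw [fB_not_mem h, fB_not_mem hb]

lemma isClone_D0 (b : X) : IsClone (D0 b) := by
  constructor
  · intro n k; exact Or.inl ⟨k, rfl⟩
  · intro n m f g hf hg
    rw [mem_D0] at hf
    rw [mem_D0]
    rcases hf with ⟨k, rfl⟩ | rfl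
    · exact mem_D0.mp (hg k)
    · exact Or.inr rfl

lemma isClone_DB {a b : X} {B : Set X} (ha : a ∉ B) (hb : b ∉ B) :
    IsClone (DB a b B) := by
  constructor
  · intro n k; exact Or.inl ⟨k, rfl⟩
  · intro n m f g hf hg
    rw [mem_DB] at hf
    rw [mem_DB]
    rcases hf with ⟨k, rfl⟩ | ⟨k, rfl⟩ | rfl
    · exact mem_DB.mp (hg k)
    · rcases mem_DB.mp (hg k) with ⟨j, hj⟩ | ⟨j, hj⟩ | hj
      · exact Or.inr (Or.inl ⟨j, by simp only; rw [hj]⟩)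
      · refine Or.inr (Or.inr (funext fun x => ?_))
        simp only; rw [hj]; exact fB_fB ha hb _
      · refine Or.inr (Or.inr (funext fun x => ?_))
        simp only; rw [hj]; exact fB_not_mem hb
    · exact Or.inr (Or.inr rfl)

lemma finite_closed {n : ℕ} (s : Set ((Fin (n + 1) → X) → X)) (hs : s.Finite) :
    letI : TopologicalSpace X := ⊥
    IsClosed s := by
  letI : TopologicalSpace X := ⊥
  haveI : DiscreteTopology X := ⟨rfl⟩
  exact hs.isClosed

lemma isLocalClone_D0 (b : X) : IsLocalClone (D0 b) := by
  refine ⟨isClone_D0 b, fun n => ?_⟩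
  refine finite_closed _ (Set.Finite.subset (((Set.finite_range
    (fun k : Fin (n+1) => (fun x : Fin (n+1) → X => x k))).insert (fun _ => b))) ?_)
  intro f hf
  rcases mem_D0.mp hf with ⟨k, rfl⟩ | rfl
  · exact Set.mem_insert_of_mem _ ⟨k, rfl⟩
  · exact Set.mem_insert _ _

lemma isLocalClone_DB {a b : X} {B : Set X} (ha : a ∉ B) (hb : b ∉ B) :
    IsLocalClone (DB a b B) := by
  refine ⟨isClone_DB ha hb, fun n => ?_⟩
  refine finite_closed _ (Set.Finite.subset
    ((((Set.finite_range (fun k : Fin (n+1) => (fun x : Fin (n+1) → X => x k))).union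
      (Set.finite_range (fun k : Fin (n+1) => (fun x : Fin (n+1) → X => fB a b B (x k))))).insert
      (fun _ => b))) ?_)
  · intro f hf
    rcases mem_DB.mp hf with ⟨k, rfl⟩ | ⟨k, rfl⟩ | rfl
    · exact Set.mem_insert_of_mem _ (Or.inl ⟨k, rfl⟩)
    · exact Set.mem_insert_of_mem _ (Or.inr ⟨k, rfl⟩)
    · exact Set.mem_insert _ _

lemma cll_const (b : X) : cllClosure {(⟨0, fun _ => b⟩ : FinOp X)} = D0 b := by
  apply subset_antisymm
  · exact Set.sInter_subset_of_mem ⟨isLocalClone_D0 b, by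
      rintro f rfl; exact mem_D0.mpr (Or.inr rfl)⟩
  · rintro ⟨n, f⟩ hf C ⟨hC, hgen⟩
    have hb : (⟨0, fun _ => b⟩ : FinOp X) ∈ C := hgen rfl
    rcases mem_D0.mp hf with ⟨k, rfl⟩ | rfl
    · exact hC.1.1 n k
    · exact hC.1.2 0 n (fun _ => b) (fun _ => fun x => x 0) hb (fun _ => hC.1.1 n 0)

lemma cll_fB {a b : X} {B : Set X} (ha : a ∉ B) (hb : b ∉ B) :
    cllClosure {(⟨0, fun x => if x 0 ∈ B then a else b⟩ : FinOp X)} = DB a b B := by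
  have hgenB : (⟨0, fun x => if x 0 ∈ B then a else b⟩ : FinOp X)
      = ⟨0, fun x => fB a b B (x 0)⟩ := rfl
  apply subset_antisymm
  · exact Set.sInter_subset_of_mem ⟨isLocalClone_DB ha hb, by
      rintro f rfl; exact mem_DB.mpr (Or.inr (Or.inl ⟨0, rfl⟩))⟩
  · rintro ⟨n, f⟩ hf C ⟨hC, hgen⟩
    have hg : (⟨0, fun x => fB a b B (x 0)⟩ : FinOp X) ∈ C := hgen rfl
    have hcomp : ∀ k : Fin (n + 1), (⟨n, fun x => fB a b B (x k)⟩ : FinOp X) ∈ C := by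
      intro k
      exact hC.1.2 0 n (fun x => fB a b B (x 0)) (fun _ => fun x => x k) hg
        (fun _ => hC.1.1 n k)
    rcases mem_DB.mp hf with ⟨k, rfl⟩ | ⟨k, rfl⟩ | rfl
    · exact hC.1.1 n k
    · exact hcomp k
    · have := hC.1.2 0 n (fun x => fB a b B (x 0)) (fun _ => fun x => fB a b B (x 0)) hg
        (fun _ => hcomp 0)
      have he : (⟨n, fun x => fB a b B (fB a b B (x 0))⟩ : FinOp X)
          = ⟨n, fun _ => b⟩ := by
        congr 1
        exact funext fun x => fB_fB ha hb (x 0)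
      rwa [he] at this

lemma fB_eq_a_iff {a b : X} (hab : a ≠ b) {B : Set X} {x : X} :
    fB a b B x = a ↔ x ∈ B := by
  by_cases h : x ∈ B
  · simp [fB_mem h, h]
  · simp [fB_not_mem h, h, hab.symm]

lemma fB_comp_eq {a b : X} (hab : a ≠ b) {B B' : Set X} (hB : B.Nonempty)
    (hbB' : b ∉ B') {n : ℕ} {k j : Fin (n + 1)}
    (h : (fun x : Fin (n + 1) → X => fB a b B (x k)) = fun x => fB a b B' (x j)) :
    B = B' := by
  by_cases hkj : k = j
  · subst hkj
    ext y
    have := congrFun h (fun _ => y)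
    simp only at this
    rw [← fB_eq_a_iff (B := B) hab (x := y), ← fB_eq_a_iff (B := B') hab (x := y), this]
  · exfalso
    obtain ⟨x₀, hx₀⟩ := hB
    have this1 : fB a b B (if k = k then x₀ else b)
        = fB a b B' (if j = k then x₀ else b) :=
      congrFun h (fun i => if i = k then x₀ else b)
    rw [if_pos rfl, if_neg (fun hh : j = k => hkj hh.symm), fB_mem hx₀,
      fB_not_mem hbB'] at this1
    exact hab this1

lemma fB_op_not_mem_D0 {a b : X} (hab : a ≠ b) {B : Set X} (hB : B.Nonempty)
    (haB : a ∉ B) :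
    (⟨0, fun x => fB a b B (x 0)⟩ : FinOp X) ∉ D0 b := by
  intro h
  obtain ⟨x₀, hx₀⟩ := hB
  rcases mem_D0.mp h with ⟨k, hk⟩ | hk
  · have := congrFun hk (fun _ => x₀)
    simp only [fB_mem hx₀] at this
    exact haB (this ▸ hx₀)
  · have := congrFun hk (fun _ => x₀)
    simp only [fB_mem hx₀] at this
    exact hab this

lemma const_a_not_mem_DB {a b : X} (hab : a ≠ b) {B : Set X} (hbB : b ∉ B) :
    (⟨0, fun _ => a⟩ : FinOp X) ∉ DB a b B := by
  intro h
  rcases mem_DB.mp h with ⟨k, hk⟩ | ⟨k, hk⟩ | hk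
  · exact hab (congrFun hk (fun _ => b))
  · have := congrFun hk (fun _ => b)
    rw [fB_not_mem hbB] at this
    exact hab this
  · exact hab (congrFun hk (fun _ => b))

lemma D0_subset_DB {a b : X} {B : Set X} : D0 b ⊆ DB a b B := by
  rintro ⟨n, f⟩ hf
  rcases mem_D0.mp hf with ⟨k, rfl⟩ | rfl
  · exact mem_DB.mpr (Or.inl ⟨k, rfl⟩)
  · exact mem_DB.mpr (Or.inr (Or.inr rfl))

lemma D0_ssubset_DB {a b : X} (hab : a ≠ b) {B : Set X} (hB : B.Nonempty)
    (haB : a ∉ B) : D0 b ⊂ DB a b B := by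
  refine ⟨D0_subset_DB, fun h => fB_op_not_mem_D0 hab hB haB
    (h (mem_DB.mpr (Or.inr (Or.inl ⟨0, rfl⟩))))⟩

lemma DB_ssubset_univ {a b : X} (hab : a ≠ b) {B : Set X} (hbB : b ∉ B) :
    DB a b B ⊂ Set.univ := by
  refine ⟨Set.subset_univ _, fun h => const_a_not_mem_DB hab hbB
    (h (Set.mem_univ _))⟩

lemma DB_inter {a b : X} (hab : a ≠ b) {B B' : Set X}
    (hB : B.Nonempty) (hB' : B'.Nonempty) (hbB : b ∉ B) (hbB' : b ∉ B')
    (hne : B ≠ B') :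
    DB a b B ∩ DB a b B' = D0 b := by
  apply subset_antisymm
  · rintro ⟨n, f⟩ ⟨h1, h2⟩
    rcases mem_DB.mp h1 with ⟨k, rfl⟩ | ⟨k, hk⟩ | rfl
    · exact mem_D0.mpr (Or.inl ⟨k, rfl⟩)
    · rcases mem_DB.mp h2 with ⟨j, hj⟩ | ⟨j, hj⟩ | hj
      · exact mem_D0.mpr (Or.inl ⟨j, hj⟩)
      · exact absurd (fB_comp_eq hab hB hbB' (hk ▸ hj)) hne
      · exact mem_D0.mpr (Or.inr hj)
    · exact mem_D0.mpr (Or.inr rfl)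
  · exact Set.subset_inter D0_subset_DB D0_subset_DB

lemma card_nonempty_subsets (a b : X) [Countable X] [Infinite X] :
    Cardinal.mk {S : Set X // S.Nonempty ∧ S ⊆ ({a, b} : Set X)ᶜ}
      = 2 ^ Cardinal.aleph0 := by
  apply le_antisymm
  · calc Cardinal.mk {S : Set X // S.Nonempty ∧ S ⊆ ({a, b} : Set X)ᶜ}
        ≤ Cardinal.mk (Set X) := Cardinal.mk_le_of_injective Subtype.val_injective
      _ = 2 ^ Cardinal.aleph0 := by rw [Cardinal.mk_set, Cardinal.mk_eq_aleph0 X]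
  · haveI : Infinite ↥(({a, b} : Set X)ᶜ) := by
      rw [Set.infinite_coe_iff]
      exact Set.Finite.infinite_compl ((Set.finite_singleton b).insert a)
    have h := Infinite.natEmbedding ↥(({a, b} : Set X)ᶜ)
    have hv : Function.Injective (fun n : ℕ => ((h (n + 1) : X))) := by
      intro m m' e
      exact Nat.succ_injective (h.injective (Subtype.val_injective e))
    have key : ∀ m : ℕ, ((h (m + 1) : X)) ≠ (h 0 : X) := by
      intro m hm
      exact Nat.succ_ne_zero m (h.injective (Subtype.val_injective hm))
    have hsub : ∀ A : Set ℕ,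
        insert ((h 0 : X)) ((fun n : ℕ => ((h (n + 1) : X))) '' A) ⊆ ({a, b} : Set X)ᶜ := by
      intro A
      rintro x (rfl | ⟨n, _, rfl⟩)
      · exact (h 0).2
      · exact (h (n + 1)).2
    have hFinj : Function.Injective
        (fun A : Set ℕ => (⟨insert ((h 0 : X)) ((fun n : ℕ => ((h (n + 1) : X))) '' A),
          ⟨_, Set.mem_insert _ _⟩, hsub A⟩ :
          {S : Set X // S.Nonempty ∧ S ⊆ ({a, b} : Set X)ᶜ})) := by
      intro A A' hAA'
      have hval : insert ((h 0 : X)) ((fun n : ℕ => ((h (n + 1) : X))) '' A)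
          = insert ((h 0 : X)) ((fun n : ℕ => ((h (n + 1) : X))) '' A') :=
        congrArg Subtype.val hAA'
      ext n
      have step : ∀ A₀ : Set ℕ, n ∈ A₀ ↔
          ((h (n + 1) : X)) ∈ insert ((h 0 : X))
            ((fun m : ℕ => ((h (m + 1) : X))) '' A₀) := by
        intro A₀
        rw [Set.mem_insert_iff, ← hv.mem_set_image (a := n) (s := A₀)]
        simp [key n]
      rw [step A, hval, ← step A']
    calc (2 : Cardinal) ^ Cardinal.aleph0 = Cardinal.mk (Set ℕ) := by
          rw [Cardinal.mk_set, Cardinal.mk_nat]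
      _ ≤ _ := Cardinal.mk_le_of_injective hFinj

end Aux

open Classical in
/-- There is a meet-preserving embedding of `M_{2^ℵ₀}` into the lattice of local
clones on the countably infinite set `X`: a local clone `𝒞₀` together with `2^ℵ₀` pairwise
distinct local clones, each strictly between `𝒞₀` and the clone of all operations, any two
distinct ones of which intersect in `𝒞₀`; explicitly one may take `𝒞₀ = ⟨{c_b}⟩_loc` and the
clones `⟨{f_B}⟩_loc` for `B` ranging over the nonempty subsets of `X \ {a,b}`, where `a ≠ b`,
`c_b` is the constant unary operation with value `b`, and `f_B` maps the elements of `B` to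
`a` and all other elements to `b`. -/
theorem meetPreserving_M_continuum (X : Type) [Countable X] [Infinite X] :
    ∃ (𝒞₀ : Set (FinOp X)) (ι : Type) (𝒞 : ι → Set (FinOp X)),
      Cardinal.mk ι = 2 ^ Cardinal.aleph0 ∧
      Function.Injective 𝒞 ∧
      IsLocalClone 𝒞₀ ∧
      (∀ i, IsLocalClone (𝒞 i) ∧ 𝒞₀ ⊂ 𝒞 i ∧ 𝒞 i ⊂ Set.univ) ∧
      (∀ i j, i ≠ j → 𝒞 i ∩ 𝒞 j = 𝒞₀) ∧
      (∃ a b : X, a ≠ b ∧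
        𝒞₀ = cllClosure {(⟨0, fun _ => b⟩ : FinOp X)} ∧
        ∃ B : ι → Set X, Function.Injective B ∧
          Set.range B = {S : Set X | S.Nonempty ∧ S ⊆ {a, b}ᶜ} ∧
          ∀ i, 𝒞 i = cllClosure
            {(⟨0, fun x => if x 0 ∈ B i then a else b⟩ : FinOp X)}) := by
  obtain ⟨a, b, hab⟩ := exists_pair_ne X
  refine ⟨D0 b, {S : Set X // S.Nonempty ∧ S ⊆ ({a, b} : Set X)ᶜ},
    fun i => DB a b i.val, card_nonempty_subsets a b, ?_, isLocalClone_D0 b, ?_, ?_,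
    a, b, hab, (cll_const b).symm, Subtype.val, Subtype.val_injective, ?_, ?_⟩
  · -- injectivity
    intro i j hij'
    have hij : DB a b i.val = DB a b j.val := hij'
    by_contra hne
    have hBne : i.val ≠ j.val := fun h => hne (Subtype.ext h)
    have haBi : a ∉ i.val := fun h => i.2.2 h (Set.mem_insert _ _)
    have hbBi : b ∉ i.val := fun h => i.2.2 h (Set.mem_insert_of_mem _ rfl)
    have hbBj : b ∉ j.val := fun h => j.2.2 h (Set.mem_insert_of_mem _ rfl)
    have hinter := DB_inter hab i.2.1 j.2.1 hbBi hbBj hBne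
    rw [hij, Set.inter_self] at hinter
    exact (D0_ssubset_DB hab i.2.1 haBi).ne (hij.trans hinter).symm
  · intro i
    have haBi : a ∉ i.val := fun h => i.2.2 h (Set.mem_insert _ _)
    have hbBi : b ∉ i.val := fun h => i.2.2 h (Set.mem_insert_of_mem _ rfl)
    exact ⟨isLocalClone_DB haBi hbBi, D0_ssubset_DB hab i.2.1 haBi,
      DB_ssubset_univ hab hbBi⟩
  · intro i j hij
    have hBne : i.val ≠ j.val := fun h => hij (Subtype.ext h)
    have hbBi : b ∉ i.val := fun h => i.2.2 h (Set.mem_insert_of_mem _ rfl)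
    have hbBj : b ∉ j.val := fun h => j.2.2 h (Set.mem_insert_of_mem _ rfl)
    exact DB_inter hab i.2.1 j.2.1 hbBi hbBj hBne
  · exact Subtype.range_val
  · intro i
    have haBi : a ∉ i.val := fun h => i.2.2 h (Set.mem_insert _ _)
    have hbBi : b ∉ i.val := fun h => i.2.2 h (Set.mem_insert_of_mem _ rfl)
    exact (cll_fB haBi hbBi).symm
end
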